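/- arXiv:0812.2306 — 5 statements merged into one kernel-verified Lean document; each statement's English description precedes it below -/
import Mathlib

section
/- The fermionic power series on the semi-infinite interval [0,∞) satisfy the fermionic recursion: for every m ∈ ℕ^l, I_{C,m}(q,z) = ∑_{0 ≤ a ≤ m} z^a q^{W_C(a)} (∏_{i=1}^l (q)_{m_i − a_i})^{−1} I_{C,a}(q,z), where 0 ≤ a ≤ m means 0 ≤ a_i ≤ m_i for all i. Moreover the solution of this recursion is unique: any family (Ĩ_m)_{m∈ℕ^l} of formal power series in ℚ(q)[[z_1,…,z_l]] with Ĩ_0 = 1 satisfying the same recursion equals (I_{C,m}(q,z))_{m∈ℕ^l}. -/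
/- STATEMENT 0: The fermionic power series I_{C,m}(q,z) on the semi-infinite
   interval [0,∞) (formal power series in z_1,…,z_l over ℚ(q)) satisfy the
   fermionic recursion
     I_{C,m} = ∑_{0≤a≤m} z^a q^{W_C(a)} (∏_i (q)_{m_i−a_i})⁻¹ I_{C,a},
   and any family (Ĩ_m) with Ĩ_0 = 1 satisfying the same recursion equals
   (I_{C,m}). -/

noncomputable section

open scoped BigOperators

/-- The field ℚ(q). -/
abbrev Kq : Type := RatFunc ℚ

/-- the variable q -/
def q0 : Kq := RatFunc.X

/-- `(q)_n = ∏_{k=1}^n (1 − q^k)` -/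
def qp0 (n : ℕ) : Kq := ∏ k ∈ Finset.range n, (1 - q0 ^ (k + 1))

/-- The number `m_i = ∑_t m_{i,t}` of particles of colour `i` in a
configuration `c = (m_{i,t})`. -/
def rowSum {l : ℕ} (c : (Fin l × ℕ) →₀ ℕ) (i : Fin l) : ℕ :=
  ∑ p ∈ c.support, if p.1 = i then c p else 0

/-- The total weight `∑_t t·m_{i,t}` of the particles of colour `i`. -/
def degSum {l : ℕ} (c : (Fin l × ℕ) →₀ ℕ) (i : Fin l) : ℕ :=
  ∑ p ∈ c.support, if p.1 = i then p.2 * c p else 0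

/-- `Q_C(𝐦) = (1/2)(∑ C_{i,i'} min(t,t') m_{i,t} m_{i',t'} − ∑ C_{i,i} t m_{i,t})`;
the expression in parentheses is even, so integer division by 2 is exact. -/
def Qc {l : ℕ} (C : Matrix (Fin l) (Fin l) ℤ) (c : (Fin l × ℕ) →₀ ℕ) : ℤ :=
  ((∑ p ∈ c.support, ∑ p' ∈ c.support,
      C p.1 p'.1 * (min p.2 p'.2 : ℤ) * c p * c p')
    - ∑ p ∈ c.support, C p.1 p.1 * (p.2 : ℤ) * c p) / 2

/-- `W_C(a) = (1/2)(∑ C_{ij} a_i a_j − ∑ C_{ii} a_i)`; the expression in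
parentheses is even, so integer division by 2 is exact. -/
def Wc {l : ℕ} (C : Matrix (Fin l) (Fin l) ℤ) (a : Fin l → ℕ) : ℤ :=
  ((∑ i, ∑ j, C i j * a i * a j) - ∑ i, C i i * a i) / 2

/-- The fermionic power series `I_{C,m}(q,z) ∈ ℚ(q)[[z_1,…,z_l]]`: the
coefficient of the monomial `z^k` is the (finite) sum over all configurations
`c = (m_{i,t})` with row sums `m` and colour-degrees `k` of
`q^{Q_C(c)} / ∏_{i,t} (q)_{m_{i,t}}`. -/
def Iser {l : ℕ} (C : Matrix (Fin l) (Fin l) ℤ) (m : Fin l → ℕ) :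
    MvPowerSeries (Fin l) Kq :=
  fun k => ∑ᶠ (c : (Fin l × ℕ) →₀ ℕ)
    (_ : (∀ i, rowSum c i = m i) ∧ (∀ i, degSum c i = k i)),
      q0 ^ Qc C c * (∏ p ∈ c.support, qp0 (c p))⁻¹

/-!
Split a configuration `c` into its particles at `t = 0`, with multiplicities `b_i = m_{i,0}`, and
the shift `t ↦ t + 1` of a configuration `c'` with row sums `a`. Shifting raises every
`min(t, t')` by one, so it adds `W_C(a)` to `Q_C`; particles at `t = 0` add nothing to `Q_C`, only
`(q)_{b_i}` to the denominator; and the `z`-degree grows by `a`. Summing over `c'` gives the term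
`z^a q^{W_C(a)} / ∏ (q)_{m_i - a_i} · I_{C,a}` of the recursion. Symmetry of `C` makes
the numerator of `W_C(a)` even, so the integer halving in `Q_C` splits over this sum.

For uniqueness, induct on `m`: in the recursion for `Ĩ_m - I_{C,m}` only the term `a = m`
survives, so `(1 - z^m r) (Ĩ_m - I_{C,m}) = 0` for a scalar `r`, and `1 - z^m r` is a unit as
`m ≠ 0`.
-/

namespace Fermionic

open Finset Finsupp MvPowerSeries

variable {l : ℕ}

lemma even_sum_sum_sub_sum_diag {ι : Type*} [DecidableEq ι] (s : Finset ι) {f : ι → ι → ℤ}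
    (hf : ∀ i j, f i j = f j i) : Even (∑ i ∈ s, ∑ j ∈ s, f i j - ∑ i ∈ s, f i i) := by
  induction s using Finset.induction_on with
  | empty => simp
  | insert k s hk ih =>
    have hcol : ∑ i ∈ s, f i k = ∑ j ∈ s, f k j := sum_congr rfl fun i _ => hf i k
    have : ∑ i ∈ insert k s, ∑ j ∈ insert k s, f i j - ∑ i ∈ insert k s, f i i =
        (∑ i ∈ s, ∑ j ∈ s, f i j - ∑ i ∈ s, f i i) + 2 * ∑ j ∈ s, f k j := by
      simp only [sum_insert hk, sum_add_distrib, hcol]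
      ring
    rw [this]
    exact ih.add (even_two_mul _)

lemma even_quadratic_sub_diag {ι : Type*} [Fintype ι] [DecidableEq ι] {C : Matrix ι ι ℤ}
    (hC : C.IsSymm) (a : ι → ℤ) : Even (∑ i, ∑ j, C i j * a i * a j - ∑ i, C i i * a i) := by
  have hoff := even_sum_sum_sub_sum_diag univ (f := fun i j => C i j * a i * a j)
    fun i j => by rw [hC.apply i j]; ring
  have hdiag : Even (∑ i, C i i * (a i * (a i - 1))) :=
    even_sum _ fun i _ => (Int.even_mul_pred_self _).mul_left _
  have hsplit : ∑ i, ∑ j, C i j * a i * a j - ∑ i, C i i * a i =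
      (∑ i, ∑ j, C i j * a i * a j - ∑ i, C i i * a i * a i) + ∑ i, C i i * (a i * (a i - 1)) := by
    simp only [mul_sub, mul_one, sum_sub_distrib, ← mul_assoc]
    ring
  exact hsplit ▸ hoff.add hdiag

theorem eq_of_forall_eq_sum_Iic {ι R : Type*} [Fintype ι] [DecidableEq ι] [Ring R]
    {T : (ι → ℕ) → (ι → ℕ) → R} (hT : ∀ m ≠ 0, IsUnit (1 - T m m)) {F G : (ι → ℕ) → R}
    (h0 : F 0 = G 0) (hF : ∀ m, F m = ∑ a ∈ Iic m, T m a * F a)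
    (hG : ∀ m, G m = ∑ a ∈ Iic m, T m a * G a) : F = G := by
  funext m
  induction m using WellFoundedLT.induction with
  | _ m ih =>
    obtain rfl | hm := eq_or_ne m 0
    · exact h0
    have hdiff : F m - G m = T m m * (F m - G m) := calc
      F m - G m = ∑ a ∈ Iic m, T m a * (F a - G a) := by
        rw [hF m, hG m, ← sum_sub_distrib]
        simp only [mul_sub]
      _ = T m m * (F m - G m) := sum_eq_single_of_mem m (mem_Iic.mpr le_rfl) fun a ha hne => by
        rw [ih a (lt_of_le_of_ne (mem_Iic.mp ha) hne), sub_self, mul_zero]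
    have : (1 - T m m) * (F m - G m) = 0 := by rw [sub_mul, one_mul, ← hdiff, sub_self]
    exact sub_eq_zero.mp ((hT m hm).mul_right_eq_zero.mp this)

lemma isUnit_one_sub_monomial {σ R : Type*} [Ring R] {n : σ →₀ ℕ} (hn : n ≠ 0) (r : R) :
    IsUnit (1 - monomial n r) := by
  classical
  rw [isUnit_iff_constantCoeff, map_sub, map_one, ← coeff_zero_eq_constantCoeff_apply,
    coeff_monomial, if_neg hn.symm, sub_zero]
  exact isUnit_one

lemma q0_ne_zero : q0 ≠ 0 := RatFunc.X_ne_zero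

lemma qp0_zero : qp0 0 = 1 := prod_range_zero _

abbrev Config (l : ℕ) := (Fin l × ℕ) →₀ ℕ

lemma rowSum_eq_sum (c : Config l) (i : Fin l) :
    rowSum c i = c.sum fun p n => if p.1 = i then n else 0 := rfl

lemma degSum_eq_sum (c : Config l) (i : Fin l) :
    degSum c i = c.sum fun p n => if p.1 = i then p.2 * n else 0 := rfl

lemma rowSum_add (c d : Config l) (i : Fin l) : rowSum (c + d) i = rowSum c i + rowSum d i := by
  simp only [rowSum_eq_sum]
  exact sum_add_index' (fun _ => ite_self 0) fun _ _ _ => by split_ifs <;> simp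

lemma degSum_add (c d : Config l) (i : Fin l) : degSum (c + d) i = degSum c i + degSum d i := by
  simp only [degSum_eq_sum]
  exact sum_add_index' (fun _ => by simp) fun _ _ _ => by split_ifs <;> simp [mul_add]

lemma apply_le_rowSum (c : Config l) (p : Fin l × ℕ) : c p ≤ rowSum c p.1 := by
  unfold rowSum
  by_cases hp : p ∈ c.support
  · simpa using single_le_sum (f := fun p' => if p'.1 = p.1 then c p' else 0)
      (fun _ _ => Nat.zero_le _) hp
  · simp [notMem_support_iff.mp hp]

lemma mul_apply_le_degSum (c : Config l) (p : Fin l × ℕ) : p.2 * c p ≤ degSum c p.1 := by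
  unfold degSum
  by_cases hp : p ∈ c.support
  · simpa using single_le_sum (f := fun p' => if p'.1 = p.1 then p'.2 * c p' else 0)
      (fun _ _ => Nat.zero_le _) hp
  · simp [notMem_support_iff.mp hp]

lemma eq_zero_of_rowSum_eq_zero {c : Config l} (hc : ∀ i, rowSum c i = 0) : c = 0 :=
  ext fun p => Nat.eq_zero_of_le_zero (hc p.1 ▸ apply_le_rowSum c p)

lemma sum_mul_eq_sum_mul_rowSum (c : Config l) (f : Fin l → ℤ) :
    (c.sum fun p n => f p.1 * n) = ∑ i, f i * rowSum c i := by
  simp only [rowSum_eq_sum, Finsupp.sum, Nat.cast_sum, Nat.cast_ite, Nat.cast_zero, Finset.mul_sum,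
    mul_ite, mul_zero]
  rw [Finset.sum_comm]
  exact sum_congr rfl fun p _ => by rw [Finset.sum_ite_eq, if_pos (mem_univ _)]

def succEmb (l : ℕ) : Fin l × ℕ ↪ Fin l × ℕ :=
  ⟨fun p => (p.1, p.2 + 1), fun p p' h => by simpa [Prod.ext_iff] using h⟩

@[simp] lemma succEmb_apply (p : Fin l × ℕ) : succEmb l p = (p.1, p.2 + 1) := rfl

def shift (c : Config l) : Config l := embDomain (succEmb l) c

def atZero (b : Fin l → ℕ) : Config l :=
  embDomain (Function.Embedding.sectL (Fin l) 0) (equivFunOnFinite.symm b)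

def unshift (c : Config l) : Config l :=
  comapDomain (succEmb l) c (succEmb l).injective.injOn

@[simp] lemma shift_apply_succ (c : Config l) (i : Fin l) (t : ℕ) : shift c (i, t + 1) = c (i, t) :=
  embDomain_apply_self _ _ (i, t)

@[simp] lemma shift_apply_zero (c : Config l) (i : Fin l) : shift c (i, 0) = 0 :=
  embDomain_of_notMem_range _ _ _ (by simp)

@[simp] lemma atZero_apply_zero (b : Fin l → ℕ) (i : Fin l) : atZero b (i, 0) = b i :=
  embDomain_apply_self _ _ i

@[simp] lemma atZero_apply_succ (b : Fin l → ℕ) (i : Fin l) (t : ℕ) : atZero b (i, t + 1) = 0 :=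
  embDomain_of_notMem_range _ _ _ (by simp)

@[simp] lemma unshift_apply (c : Config l) (i : Fin l) (t : ℕ) : unshift c (i, t) = c (i, t + 1) :=
  rfl

lemma unshift_shift_add_atZero (c : Config l) (b : Fin l → ℕ) : unshift (shift c + atZero b) = c :=
  ext fun ⟨_, _⟩ => by simp

lemma shift_unshift_add_atZero (c : Config l) :
    shift (unshift c) + atZero (fun i => c (i, 0)) = c :=
  ext fun ⟨i, t⟩ => by cases t <;> simp

lemma disjoint_support_shift_atZero (c : Config l) (b : Fin l → ℕ) :
    Disjoint (shift c).support (atZero b).support := by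
  simp only [shift, atZero, support_embDomain, disjoint_left, mem_map]
  rintro _ ⟨p, -, rfl⟩ ⟨i, -, h⟩
  simp [Prod.ext_iff] at h

lemma rowSum_shift (c : Config l) (i : Fin l) : rowSum (shift c) i = rowSum c i := by
  rw [rowSum_eq_sum, shift, sum_embDomain]
  rfl

lemma degSum_shift (c : Config l) (i : Fin l) : degSum (shift c) i = degSum c i + rowSum c i := by
  rw [degSum_eq_sum, shift, sum_embDomain, degSum_eq_sum, rowSum_eq_sum, ← Finsupp.sum_add]
  exact sum_congr rfl fun p _ => by by_cases h : p.1 = i <;> simp [h, add_mul]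

lemma rowSum_atZero (b : Fin l → ℕ) (i : Fin l) : rowSum (atZero b) i = b i := by
  rw [rowSum_eq_sum, atZero, sum_embDomain]
  exact sum_ite_self_eq' _ i

lemma degSum_atZero (b : Fin l → ℕ) (i : Fin l) : degSum (atZero b) i = 0 := by
  rw [degSum_eq_sum, atZero, sum_embDomain]
  simp

def minPairing (C : Matrix (Fin l) (Fin l) ℤ) (c d : Config l) : ℤ :=
  c.sum fun p n => d.sum fun p' n' => C p.1 p'.1 * (min p.2 p'.2 : ℤ) * n * n'

def diagWeight (C : Matrix (Fin l) (Fin l) ℤ) (c : Config l) : ℤ :=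
  c.sum fun p n => C p.1 p.1 * (p.2 : ℤ) * n

lemma Qc_eq (C : Matrix (Fin l) (Fin l) ℤ) (c : Config l) :
    Qc C c = (minPairing C c c - diagWeight C c) / 2 := rfl

lemma sum_sum_mul_eq_sum_sum_mul_rowSum (g : Fin l → Fin l → ℤ) (c d : Config l) :
    (c.sum fun p n => d.sum fun p' n' => g p.1 p'.1 * n * n') =
      ∑ i, ∑ j, g i j * rowSum c i * rowSum d j := by
  have hinner (p : Fin l × ℕ) (n : ℕ) :
      (d.sum fun p' n' => g p.1 p'.1 * n * n') = (∑ j, g p.1 j * rowSum d j) * n := by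
    rw [sum_mul_eq_sum_mul_rowSum d fun j => g p.1 j * n, Finset.sum_mul]
    exact sum_congr rfl fun _ _ => by ring
  simp only [hinner]
  rw [sum_mul_eq_sum_mul_rowSum c fun i => ∑ j, g i j * rowSum d j]
  simp only [Finset.sum_mul]
  exact sum_congr rfl fun _ _ => sum_congr rfl fun _ _ => by ring

lemma minPairing_add_left (C : Matrix (Fin l) (Fin l) ℤ) (c c' d : Config l) :
    minPairing C (c + c') d = minPairing C c d + minPairing C c' d :=
  sum_add_index' (fun _ => by simp) fun _ _ _ => by
    simp only [Nat.cast_add, mul_add, add_mul, Finsupp.sum_add]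

lemma minPairing_add_right (C : Matrix (Fin l) (Fin l) ℤ) (c d d' : Config l) :
    minPairing C c (d + d') = minPairing C c d + minPairing C c d' := by
  simp only [minPairing, ← Finsupp.sum_add]
  exact sum_congr rfl fun _ _ => sum_add_index' (fun _ => by simp) fun _ _ _ => by
    simp only [Nat.cast_add, mul_add]

lemma minPairing_atZero_left (C : Matrix (Fin l) (Fin l) ℤ) (b : Fin l → ℕ) (d : Config l) :
    minPairing C (atZero b) d = 0 := by
  simp [minPairing, atZero, sum_embDomain]

lemma minPairing_atZero_right (C : Matrix (Fin l) (Fin l) ℤ) (c : Config l) (b : Fin l → ℕ) :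
    minPairing C c (atZero b) = 0 := by
  simp [minPairing, atZero, sum_embDomain]

lemma minPairing_shift (C : Matrix (Fin l) (Fin l) ℤ) (c : Config l) :
    minPairing C (shift c) (shift c) =
      minPairing C c c + ∑ i, ∑ j, C i j * rowSum c i * rowSum c j := by
  rw [← sum_sum_mul_eq_sum_sum_mul_rowSum C, minPairing, shift, sum_embDomain, minPairing,
    ← Finsupp.sum_add]
  refine sum_congr rfl fun p _ => ?_
  dsimp only
  rw [sum_embDomain, ← Finsupp.sum_add]
  refine sum_congr rfl fun p' _ => ?_
  simp only [succEmb_apply, Nat.cast_add, Nat.cast_one, min_add_add_right]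
  ring

lemma diagWeight_add (C : Matrix (Fin l) (Fin l) ℤ) (c d : Config l) :
    diagWeight C (c + d) = diagWeight C c + diagWeight C d :=
  sum_add_index' (fun _ => by simp) fun _ _ _ => by simp only [Nat.cast_add, mul_add]

lemma diagWeight_atZero (C : Matrix (Fin l) (Fin l) ℤ) (b : Fin l → ℕ) :
    diagWeight C (atZero b) = 0 := by
  simp [diagWeight, atZero, sum_embDomain]

lemma diagWeight_shift (C : Matrix (Fin l) (Fin l) ℤ) (c : Config l) :
    diagWeight C (shift c) = diagWeight C c + ∑ i, C i i * rowSum c i := by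
  rw [← sum_mul_eq_sum_mul_rowSum _ fun i => C i i, diagWeight, shift, sum_embDomain, diagWeight,
    ← Finsupp.sum_add]
  refine sum_congr rfl fun p _ => ?_
  simp only [succEmb_apply, Nat.cast_add, Nat.cast_one]
  ring

lemma Qc_shift_add_atZero {C : Matrix (Fin l) (Fin l) ℤ} (hC : C.IsSymm) (c : Config l)
    (b : Fin l → ℕ) : Qc C (shift c + atZero b) = Qc C c + Wc C (rowSum c) := by
  have hnum : minPairing C (shift c + atZero b) (shift c + atZero b) -
      diagWeight C (shift c + atZero b) = (minPairing C c c - diagWeight C c) +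
        ((∑ i, ∑ j, C i j * rowSum c i * rowSum c j) - ∑ i, C i i * rowSum c i) := by
    rw [minPairing_add_left, minPairing_add_right, minPairing_add_right, minPairing_atZero_left,
      minPairing_atZero_left, minPairing_atZero_right, minPairing_shift, diagWeight_add,
      diagWeight_shift, diagWeight_atZero]
    ring
  rw [Qc_eq, Qc_eq, Wc, hnum, Int.add_ediv_of_dvd_right
    (even_quadratic_sub_diag hC fun i => (rowSum c i : ℤ)).two_dvd]

def weight (C : Matrix (Fin l) (Fin l) ℤ) (c : Config l) : Kq :=
  q0 ^ Qc C c * (c.prod fun _ n => qp0 n)⁻¹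

lemma prod_qp0_shift_add_atZero (c : Config l) (b : Fin l → ℕ) :
    ((shift c + atZero b).prod fun _ n => qp0 n) = (∏ i, qp0 (b i)) * c.prod fun _ n => qp0 n := by
  rw [prod_add_index_of_disjoint (disjoint_support_shift_atZero c b), shift, atZero,
    prod_embDomain, prod_embDomain, prod_fintype (equivFunOnFinite.symm b) _ fun _ => qp0_zero,
    mul_comm]
  rfl

lemma weight_shift_add_atZero {C : Matrix (Fin l) (Fin l) ℤ} (hC : C.IsSymm) (c : Config l)
    (b : Fin l → ℕ) :
    weight C (shift c + atZero b) = q0 ^ Wc C (rowSum c) * (∏ i, qp0 (b i))⁻¹ * weight C c := by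
  rw [weight, weight, Qc_shift_add_atZero hC, zpow_add₀ q0_ne_zero, prod_qp0_shift_add_atZero,
    mul_inv]
  ring

lemma rowSum_shift_add_atZero (c : Config l) (b : Fin l → ℕ) (i : Fin l) :
    rowSum (shift c + atZero b) i = rowSum c i + b i := by
  rw [rowSum_add, rowSum_shift, rowSum_atZero]

lemma degSum_shift_add_atZero (c : Config l) (b : Fin l → ℕ) (i : Fin l) :
    degSum (shift c + atZero b) i = degSum c i + rowSum c i := by
  rw [degSum_add, degSum_shift, degSum_atZero, add_zero]

lemma rowSum_eq_rowSum_unshift_add (c : Config l) (i : Fin l) :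
    rowSum c i = rowSum (unshift c) i + c (i, 0) := by
  conv_lhs => rw [← shift_unshift_add_atZero c]
  exact rowSum_shift_add_atZero _ _ i

lemma degSum_eq_degSum_unshift_add (c : Config l) (i : Fin l) :
    degSum c i = degSum (unshift c) i + rowSum (unshift c) i := by
  conv_lhs => rw [← shift_unshift_add_atZero c]
  exact degSum_shift_add_atZero _ _ i

lemma apply_zero_eq_sub {c : Config l} {m : Fin l → ℕ} (hrow : ∀ i, rowSum c i = m i) (i : Fin l) :
    c (i, 0) = m i - rowSum (unshift c) i := by
  have := rowSum_eq_rowSum_unshift_add c i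
  have := hrow i
  omega

lemma finite_setOf_rowSum_degSum (m : Fin l → ℕ) (k : Fin l →₀ ℕ) :
    {c : Config l | (∀ i, rowSum c i = m i) ∧ ∀ i, degSum c i = k i}.Finite := by
  refine ((univ ×ˢ range (∑ i, k i + 1)).finsupp fun p => range (m p.1 + 1)).finite_toSet.subset ?_
  rintro c ⟨hrow, hdeg⟩
  rw [mem_coe, mem_finsupp_iff]
  refine ⟨fun p hp => ?_, fun p _ => mem_range_succ_iff.mpr (hrow p.1 ▸ apply_le_rowSum c p)⟩
  have hpk : p.2 ≤ k p.1 :=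
    (Nat.le_mul_of_pos_right _ (Nat.pos_of_ne_zero (mem_support_iff.mp hp))).trans
      (hdeg p.1 ▸ mul_apply_le_degSum c p)
  have hkN : k p.1 ≤ ∑ i, k i := single_le_sum (fun _ _ => Nat.zero_le _) (mem_univ p.1)
  simpa using Nat.lt_succ_of_le (hpk.trans hkN)

def configs (m : Fin l → ℕ) (k : Fin l →₀ ℕ) : Finset (Config l) :=
  (finite_setOf_rowSum_degSum m k).toFinset

lemma mem_configs {m : Fin l → ℕ} {k : Fin l →₀ ℕ} {c : Config l} :
    c ∈ configs m k ↔ (∀ i, rowSum c i = m i) ∧ ∀ i, degSum c i = k i :=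
  Set.Finite.mem_toFinset _

lemma coeff_Iser (C : Matrix (Fin l) (Fin l) ℤ) (m : Fin l → ℕ) (k : Fin l →₀ ℕ) :
    coeff k (Iser C m) = ∑ c ∈ configs m k, weight C c :=
  finsum_cond_eq_sum_of_cond_iff _ fun _ => mem_configs.symm

lemma Iser_zero (C : Matrix (Fin l) (Fin l) ℤ) : Iser C 0 = 1 := by
  classical
  ext k
  have hconfigs : configs 0 k = if k = 0 then {0} else ∅ := by
    ext c
    rw [mem_configs]
    constructor
    · rintro ⟨hrow, hdeg⟩
      obtain rfl := eq_zero_of_rowSum_eq_zero hrow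
      have hk : k = 0 := ext fun i => by simp [← hdeg i, degSum]
      simp [hk]
    · split_ifs with hk
      · rintro h
        rw [mem_singleton.mp h]
        exact ⟨fun i => by simp [rowSum], fun i => by simp [degSum, hk]⟩
      · simp
  rw [coeff_Iser, coeff_one, hconfigs]
  split_ifs <;> simp [weight, Qc]

def recursionCoeff (C : Matrix (Fin l) (Fin l) ℤ) (m a : Fin l → ℕ) : MvPowerSeries (Fin l) Kq :=
  monomial (equivFunOnFinite.symm a) (q0 ^ Wc C a * (∏ i, qp0 (m i - a i))⁻¹)

lemma coeff_sum_recursionCoeff_mul_Iser (C : Matrix (Fin l) (Fin l) ℤ) (m : Fin l → ℕ)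
    (k : Fin l →₀ ℕ) :
    coeff k (∑ a ∈ Iic m, recursionCoeff C m a * Iser C a) =
      ∑ x ∈ ((Iic m).filter fun a => equivFunOnFinite.symm a ≤ k).sigma
          (fun a => configs a (k - equivFunOnFinite.symm a)),
        q0 ^ Wc C x.1 * (∏ i, qp0 (m i - x.1 i))⁻¹ * weight C x.2 := by
  rw [sum_sigma, sum_filter, map_sum]
  simp_rw [recursionCoeff, coeff_monomial_mul, coeff_Iser, Finset.mul_sum]

theorem Iser_eq_sum {C : Matrix (Fin l) (Fin l) ℤ} (hC : C.IsSymm) (m : Fin l → ℕ) :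
    Iser C m = ∑ a ∈ Iic m, recursionCoeff C m a * Iser C a := by
  ext k
  rw [coeff_Iser, coeff_sum_recursionCoeff_mul_Iser]
  refine sum_bij' (fun c _ => ⟨rowSum (unshift c), unshift c⟩)
    (fun x _ => shift x.2 + atZero (m - x.1)) ?_ ?_ ?_ ?_ ?_
  · intro c hc
    obtain ⟨hrow, hdeg⟩ := mem_configs.mp hc
    simp only [mem_sigma, mem_filter, mem_Iic, Pi.le_def, Finsupp.le_def, mem_configs,
      coe_tsub, Pi.sub_apply, coe_equivFunOnFinite_symm]
    refine ⟨⟨fun i => ?_, fun i => ?_⟩, fun _ => trivial, fun i => ?_⟩ <;>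
    · have := rowSum_eq_rowSum_unshift_add c i
      have := degSum_eq_degSum_unshift_add c i
      grind
  · rintro ⟨a, c⟩ hx
    simp only [mem_sigma, mem_filter, mem_Iic, Pi.le_def, Finsupp.le_def, mem_configs,
      coe_tsub, Pi.sub_apply, coe_equivFunOnFinite_symm] at hx
    obtain ⟨⟨ham, hak⟩, hrow, hdeg⟩ := hx
    refine mem_configs.mpr ⟨fun i => ?_, fun i => ?_⟩
    · rw [rowSum_shift_add_atZero, hrow, Pi.sub_apply]
      grind
    · rw [degSum_shift_add_atZero, hrow, hdeg]
      grind
  · intro c hc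
    have hb : m - rowSum (unshift c) = fun i => c (i, 0) :=
      funext fun i => (apply_zero_eq_sub (mem_configs.mp hc).1 i).symm
    rw [hb, shift_unshift_add_atZero]
  · rintro ⟨a, c⟩ hx
    have hrow : rowSum c = a := funext (mem_configs.mp (mem_sigma.mp hx).2).1
    rw [unshift_shift_add_atZero, hrow]
  · intro c hc
    conv_lhs => rw [← shift_unshift_add_atZero c]
    rw [weight_shift_add_atZero hC]
    simp only [apply_zero_eq_sub (mem_configs.mp hc).1]

end Fermionic

theorem stmt_0_general (l : ℕ) (C : Matrix (Fin l) (Fin l) ℤ)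
    (hsym : C.IsSymm) :
    (∀ m : Fin l → ℕ, Iser C m =
      ∑ a ∈ Finset.Iic m,
        (MvPowerSeries.monomial (R := Kq) (Finsupp.equivFunOnFinite.symm a)
          (q0 ^ Wc C a * (∏ i, qp0 (m i - a i))⁻¹)) * Iser C a)
    ∧ (∀ Itld : (Fin l → ℕ) → MvPowerSeries (Fin l) Kq, Itld 0 = 1 →
        (∀ m : Fin l → ℕ, Itld m =
          ∑ a ∈ Finset.Iic m,
            (MvPowerSeries.monomial (R := Kq) (Finsupp.equivFunOnFinite.symm a)
              (q0 ^ Wc C a * (∏ i, qp0 (m i - a i))⁻¹)) * Itld a) →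
        Itld = Iser C) := by
  refine ⟨Fermionic.Iser_eq_sum hsym, fun Itld h0 hrec => ?_⟩
  refine Fermionic.eq_of_forall_eq_sum_Iic (T := Fermionic.recursionCoeff C)
    (fun m hm => Fermionic.isUnit_one_sub_monomial ?_ _) (h0.trans (Fermionic.Iser_zero C).symm)
    hrec (Fermionic.Iser_eq_sum hsym)
  exact fun h => hm (funext fun i => DFunLike.congr_fun h i)

theorem stmt_0 (l : ℕ) (hl : 1 ≤ l) (C : Matrix (Fin l) (Fin l) ℤ)
    (hsym : C.IsSymm) :
    (∀ m : Fin l → ℕ, Iser C m =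
      ∑ a ∈ Finset.Iic m,
        (MvPowerSeries.monomial (R := Kq) (Finsupp.equivFunOnFinite.symm a)
          (q0 ^ Wc C a * (∏ i, qp0 (m i - a i))⁻¹)) * Iser C a)
    ∧ (∀ Itld : (Fin l → ℕ) → MvPowerSeries (Fin l) Kq, Itld 0 = 1 →
        (∀ m : Fin l → ℕ, Itld m =
          ∑ a ∈ Finset.Iic m,
            (MvPowerSeries.monomial (R := Kq) (Finsupp.equivFunOnFinite.symm a)
              (q0 ^ Wc C a * (∏ i, qp0 (m i - a i))⁻¹)) * Itld a) →
        Itld = Iser C) :=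
  stmt_0_general l C hsym

end
end

section
/- For all integers r ≤ u < s and every m ∈ ℕ^l, the finite-interval fermionic sums satisfy the splitting relation J_m[r,s](q,z) = ∑_{a+b=m} J_a[r,u](q, z·q^{Bb}) · J_b[u+1,s](q, z), where the sum is over all pairs a, b ∈ ℕ^l with a + b = m, and z·q^{Bb} denotes the substitution z_i ↦ z_i q^{(Bb)_i} with (Bb)_i = ∑_j B_{ij} b_j. -/
/-! Cut a tuple `(n⁽ᵗ⁾)_{t=r}^s` at `u` into its parts on `[r, u]` and `[u+1, s]`, and let `b`
be the total of the second part. Since `min t t' = t` for `t ≤ u < t'`, the exponent `E` is the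
sum of the exponents of the two parts plus the cross term `∑_{t ≤ u < t'} t (n⁽ᵗ⁾)ᵀ B n⁽ᵗ'⁾
= ∑ᵢ (Bb)ᵢ ∑_{t ≤ u} t nᵢ⁽ᵗ⁾`, which is exactly what the substitution `zᵢ ↦ zᵢ q^{(Bb)ᵢ}` produces
in the first factor. The halving in `E` stays exact on each part because `B` is symmetric with
even diagonal. -/

noncomputable section

open scoped BigOperators

/-- The field ℚ(q, z_1, …, z_l). -/
abbrev F2 (l : ℕ) : Type := FractionRing (MvPolynomial (Fin (l + 1)) ℚ)

/-- the variable q -/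
def q2 (l : ℕ) : F2 l :=
  algebraMap (MvPolynomial (Fin (l + 1)) ℚ) (F2 l) (MvPolynomial.X 0)

/-- the variables z_i -/
def z2 (l : ℕ) (i : Fin l) : F2 l :=
  algebraMap (MvPolynomial (Fin (l + 1)) ℚ) (F2 l) (MvPolynomial.X i.succ)

/-- `(Q;Q)_n = ∏_{k=1}^n (1 − Q^k)` -/
def pochQ {F : Type} [Field F] (Q : F) (n : ℕ) : F :=
  ∏ k ∈ Finset.range n, (1 - Q ^ (k + 1))

/-- `(Bb)_i = ∑_j B_{ij} b_j` -/
def Bv {l : ℕ} (B : Matrix (Fin l) (Fin l) ℤ) (b : Fin l → ℕ) (i : Fin l) : ℤ :=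
  ∑ j, B i j * b j

/-- The exponent
`E = (1/2)∑_{t,t'=r}^s min(t,t') ∑_{i,j} B_{ij} n_i^{(t)} n_j^{(t')}
     − ∑_{t=r}^s t ∑_i d_i n_i^{(t)}`, where `t = r + j`; the double sum is
even (as B_{ii} = 2d_i), so integer division by 2 is exact. -/
def Eint {l : ℕ} (B : Matrix (Fin l) (Fin l) ℤ) (d : Fin l → ℕ) (r : ℤ)
    {N : ℕ} (n : Fin N → Fin l → ℕ) : ℤ :=
  (∑ j, ∑ j', min (r + (j.1 : ℤ)) (r + (j'.1 : ℤ)) *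
      ∑ i, ∑ i', B i i' * n j i * n j' i') / 2
  - ∑ j, (r + (j.1 : ℤ)) * ∑ i, (d i : ℤ) * n j i

/-- The finite-interval fermionic sum `J_m[r,s](q,z)` (for `r ≤ s`): the sum
over tuples `(n^{(t)})_{t=r}^s` in ℕ^l with `∑_t n^{(t)} = m` of
`q^E (∏_i z_i^{∑_t t n_i^{(t)}}) / ∏_{t,i} (q_i;q_i)_{n_i^{(t)}}`. -/
def Jint {l : ℕ} (B : Matrix (Fin l) (Fin l) ℤ) (d : Fin l → ℕ)
    {F : Type} [Field F] (q : F) (z : Fin l → F) (r s : ℤ) (m : Fin l → ℕ) : F :=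
  ∑ n ∈ Finset.filter
      (fun n : Fin ((s - r).toNat + 1) → Fin l → ℕ => (∑ j, n j) = m)
      (Fintype.piFinset fun _ : Fin ((s - r).toNat + 1) =>
        Fintype.piFinset fun i => Finset.Iic (m i)),
    q ^ (Eint B d r n) *
      (∏ i, z i ^ (∑ j, (r + (j.1 : ℤ)) * n j i)) *
      (∏ j, ∏ i, pochQ (q ^ d i) (n j i))⁻¹

open Finset

lemma zpow_sum₀ {G₀ ι : Type*} [CommGroupWithZero G₀] {a : G₀} (ha : a ≠ 0) (s : Finset ι)
    (f : ι → ℤ) : a ^ (∑ i ∈ s, f i) = ∏ i ∈ s, a ^ f i := by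
  classical
  induction s using Finset.induction with
  | empty => simp
  | insert x s hx ih => rw [sum_insert hx, prod_insert hx, zpow_add₀ ha, ih]

lemma two_dvd_sum_sum_of_symm {α : Type*} [Fintype α] (a : α → α → ℤ)
    (hsymm : ∀ i j, a i j = a j i) (hdiag : ∀ i, 2 ∣ a i i) : 2 ∣ ∑ i, ∑ j, a i j := by
  classical
  have hdiag' : ∀ i, (a i i : ZMod 2) = 0 := fun i =>
    (ZMod.intCast_zmod_eq_zero_iff_dvd _ 2).mpr (hdiag i)
  -- Off the diagonal the terms cancel in pairs `(i, j)`, `(j, i)` modulo 2.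
  have hoff : ∑ p ∈ (univ : Finset α).offDiag, (a p.1 p.2 : ZMod 2) = 0 := by
    refine sum_involution (fun p _ => p.swap) (fun p _ => ?_) (fun p hp _ h => ?_)
      (fun p hp => by simpa [eq_comm] using hp) (fun p _ => p.swap_swap)
    · rw [Prod.fst_swap, Prod.snd_swap, hsymm p.2 p.1, CharTwo.add_self_eq_zero]
    · exact (mem_offDiag.mp hp).2.2 (by simpa using congrArg Prod.fst h.symm)
  have hsum : ((∑ i, ∑ j, a i j : ℤ) : ZMod 2) = 0 := by
    push_cast
    rw [← sum_product', ← diag_union_offDiag, sum_union (disjoint_diag_offDiag _), sum_diag, hoff,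
      sum_eq_zero fun i _ => hdiag' i, add_zero]
  exact_mod_cast (ZMod.intCast_zmod_eq_zero_iff_dvd _ 2).mp hsum

section Pairing

variable {l : ℕ} (B : Matrix (Fin l) (Fin l) ℤ)

def pairing (x y : Fin l → ℕ) : ℤ :=
  ∑ i, ∑ i', B i i' * x i * y i'

lemma pairing_comm (hB : B.IsSymm) (x y : Fin l → ℕ) : pairing B x y = pairing B y x := by
  rw [pairing, pairing, sum_comm]
  refine sum_congr rfl fun i _ => sum_congr rfl fun i' _ => ?_
  rw [hB.apply i i']
  ring

lemma two_dvd_pairing_self (hB : B.IsSymm) (hdiag : ∀ i, 2 ∣ B i i) (x : Fin l → ℕ) :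
    2 ∣ pairing B x x :=
  two_dvd_sum_sum_of_symm _ (fun i i' => by rw [hB.apply i i']; ring)
    (fun i => (hdiag i).mul_right _ |>.mul_right _)

lemma pairing_eq_sum_mul_Bv (x b : Fin l → ℕ) : pairing B x b = ∑ i, x i * Bv B b i := by
  refine sum_congr rfl fun i _ => ?_
  rw [Bv, mul_sum]
  exact sum_congr rfl fun i' _ => by ring

lemma pairing_sum_right {N : ℕ} (x : Fin l → ℕ) (y : Fin N → Fin l → ℕ) :
    pairing B x (∑ j, y j) = ∑ j, pairing B x (y j) := by
  simp only [pairing, Finset.sum_apply, Nat.cast_sum, mul_sum]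
  exact (sum_congr rfl fun i _ => sum_comm).trans sum_comm

end Pairing

section Energy

variable {l : ℕ} (B : Matrix (Fin l) (Fin l) ℤ)

def quadSum (r : ℤ) {N : ℕ} (n : Fin N → Fin l → ℕ) : ℤ :=
  ∑ j, ∑ j', min (r + (j.1 : ℤ)) (r + (j'.1 : ℤ)) * pairing B (n j) (n j')

lemma Eint_eq_quadSum (d : Fin l → ℕ) (r : ℤ) {N : ℕ} (n : Fin N → Fin l → ℕ) :
    Eint B d r n = quadSum B r n / 2 - ∑ j, (r + (j.1 : ℤ)) * ∑ i, (d i : ℤ) * n j i :=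
  rfl

lemma two_dvd_quadSum (hB : B.IsSymm) (hdiag : ∀ i, 2 ∣ B i i) (r : ℤ) {N : ℕ}
    (n : Fin N → Fin l → ℕ) : 2 ∣ quadSum B r n :=
  two_dvd_sum_sum_of_symm _ (fun j j' => by rw [min_comm, pairing_comm B hB])
    (fun j => (two_dvd_pairing_self B hB hdiag (n j)).mul_left _)

lemma quadSum_append (hB : B.IsSymm) (r : ℤ) {N₁ N₂ : ℕ} (n₁ : Fin N₁ → Fin l → ℕ)
    (n₂ : Fin N₂ → Fin l → ℕ) :
    quadSum B r (Fin.append n₁ n₂) = quadSum B r n₁ + quadSum B (r + N₁) n₂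
      + 2 * ∑ j, (r + (j.1 : ℤ)) * pairing B (n₁ j) (∑ j', n₂ j') := by
  have hmin : ∀ (j : Fin N₁) (j' : Fin N₂),
      min (r + (j.1 : ℤ)) (r + ((N₁ + j'.1 : ℕ) : ℤ)) = r + j.1 := fun j j' =>
    min_eq_left (by have := j'.2; push_cast; omega)
  have hcross : ∑ j : Fin N₁, ∑ j' : Fin N₂,
      min (r + (j.1 : ℤ)) (r + ((N₁ + j'.1 : ℕ) : ℤ)) * pairing B (n₁ j) (n₂ j')
      = ∑ j, (r + (j.1 : ℤ)) * pairing B (n₁ j) (∑ j', n₂ j') := by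
    simp only [hmin, ← mul_sum, pairing_sum_right]
  have hcross' : ∑ j : Fin N₂, ∑ j' : Fin N₁,
      min (r + ((N₁ + j.1 : ℕ) : ℤ)) (r + (j'.1 : ℤ)) * pairing B (n₂ j) (n₁ j')
      = ∑ j, (r + (j.1 : ℤ)) * pairing B (n₁ j) (∑ j', n₂ j') := by
    rw [sum_comm, ← hcross]
    exact sum_congr rfl fun j _ => sum_congr rfl fun j' _ => by
      rw [min_comm, pairing_comm B hB]
  have hshift : ∀ j : Fin N₂, r + ((N₁ + j.1 : ℕ) : ℤ) = r + N₁ + j.1 := fun j => by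
    push_cast; ring
  simp only [quadSum, Fin.sum_univ_add, Fin.append_left, Fin.append_right, Fin.val_castAdd,
    Fin.val_natAdd, sum_add_distrib]
  rw [hcross, hcross']
  simp only [hshift]
  ring

lemma Eint_append (d : Fin l → ℕ) (hB : B.IsSymm) (hdiag : ∀ i, 2 ∣ B i i) (r : ℤ)
    {N₁ N₂ : ℕ} (n₁ : Fin N₁ → Fin l → ℕ) (n₂ : Fin N₂ → Fin l → ℕ) :
    Eint B d r (Fin.append n₁ n₂) = Eint B d r n₁ + Eint B d (r + N₁) n₂
      + ∑ i, Bv B (∑ j, n₂ j) i * ∑ j, (r + (j.1 : ℤ)) * n₁ j i := by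
  have hcross : ∑ j, (r + (j.1 : ℤ)) * pairing B (n₁ j) (∑ j', n₂ j')
      = ∑ i, Bv B (∑ j, n₂ j) i * ∑ j, (r + (j.1 : ℤ)) * n₁ j i := by
    simp only [pairing_eq_sum_mul_Bv, mul_sum]
    rw [sum_comm]
    exact sum_congr rfl fun i _ => sum_congr rfl fun j _ => by ring
  have hlin : ∑ j : Fin (N₁ + N₂), (r + (j.1 : ℤ)) * ∑ i, (d i : ℤ) * Fin.append n₁ n₂ j i
      = ∑ j, (r + (j.1 : ℤ)) * ∑ i, (d i : ℤ) * n₁ j i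
        + ∑ j, (r + N₁ + (j.1 : ℤ)) * ∑ i, (d i : ℤ) * n₂ j i := by
    simp only [Fin.sum_univ_add, Fin.append_left, Fin.append_right, Fin.val_castAdd,
      Fin.val_natAdd, Nat.cast_add, add_assoc]
  rw [Eint_eq_quadSum, Eint_eq_quadSum, Eint_eq_quadSum, quadSum_append B hB, hcross, hlin,
    Int.add_mul_ediv_left _ _ two_ne_zero,
    Int.add_ediv_of_dvd_left (two_dvd_quadSum B hB hdiag r n₁)]
  ring

end Energy

section FermionicSum

variable {l : ℕ}

def weakCompositions (N : ℕ) (m : Fin l → ℕ) : Finset (Fin N → Fin l → ℕ) :=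
  {n ∈ Fintype.piFinset fun _ => Fintype.piFinset fun i => Iic (m i) | ∑ j, n j = m}

lemma mem_weakCompositions {N : ℕ} {m : Fin l → ℕ} {n : Fin N → Fin l → ℕ} :
    n ∈ weakCompositions N m ↔ ∑ j, n j = m := by
  refine ⟨fun h => (mem_filter.mp h).2, fun h => mem_filter.mpr ⟨?_, h⟩⟩
  simp only [Fintype.mem_piFinset, mem_Iic]
  intro j i
  rw [← h]
  exact single_le_sum (f := n) (fun _ _ => zero_le) (mem_univ j) i

lemma sum_weakCompositions_add {M : Type*} [AddCommMonoid M] (N₁ N₂ : ℕ) (m : Fin l → ℕ)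
    (f : (Fin (N₁ + N₂) → Fin l → ℕ) → M) :
    ∑ n ∈ weakCompositions (N₁ + N₂) m, f n
      = ∑ b ∈ Iic m, ∑ n₁ ∈ weakCompositions N₁ (m - b), ∑ n₂ ∈ weakCompositions N₂ b,
          f (Fin.append n₁ n₂) := by
  simp only [← sum_product']
  rw [sum_sigma']
  refine sum_bij' (fun n _ => ⟨∑ j, n (Fin.natAdd N₁ j), (fun j => n (Fin.castAdd N₂ j),
      fun j => n (Fin.natAdd N₁ j))⟩) (fun p _ => Fin.append p.2.1 p.2.2) ?_ ?_ ?_ ?_ ?_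
  · intro n hn
    rw [mem_weakCompositions, Fin.sum_univ_add] at hn
    simp only [mem_sigma, mem_product, mem_Iic, mem_weakCompositions, ← hn,
      add_tsub_cancel_right, le_add_self, and_self]
  · rintro ⟨b, n₁, n₂⟩ hp
    simp only [mem_sigma, mem_product, mem_Iic, mem_weakCompositions] at hp ⊢
    rw [Fin.sum_univ_add]
    simp only [Fin.append_left, Fin.append_right, hp.2.1, hp.2.2, tsub_add_cancel_of_le hp.1]
  · intro n _
    exact Fin.append_castAdd_natAdd
  · rintro ⟨b, n₁, n₂⟩ hp
    simp only [mem_sigma, mem_product, mem_weakCompositions] at hp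
    simp only [Fin.append_left, Fin.append_right, hp.2.2]
  · intro n _
    rw [Fin.append_castAdd_natAdd]

variable (B : Matrix (Fin l) (Fin l) ℤ) (d : Fin l → ℕ) {F : Type} [Field F] (q : F)
  (z : Fin l → F)

def fermionicTerm (r : ℤ) {N : ℕ} (n : Fin N → Fin l → ℕ) : F :=
  q ^ (Eint B d r n) * (∏ i, z i ^ (∑ j, (r + (j.1 : ℤ)) * n j i)) *
    (∏ j, ∏ i, pochQ (q ^ d i) (n j i))⁻¹

def fermionicSum (r : ℤ) (N : ℕ) (m : Fin l → ℕ) : F :=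
  ∑ n ∈ weakCompositions N m, fermionicTerm B d q z r n

lemma Jint_eq_fermionicSum (r s : ℤ) (m : Fin l → ℕ) :
    Jint B d q z r s m = fermionicSum B d q z r ((s - r).toNat + 1) m :=
  rfl

variable {q z}

lemma fermionicTerm_append (hq : q ≠ 0) (hz : ∀ i, z i ≠ 0) (hB : B.IsSymm)
    (hdiag : ∀ i, 2 ∣ B i i) (r : ℤ) {N₁ N₂ : ℕ} (n₁ : Fin N₁ → Fin l → ℕ)
    (n₂ : Fin N₂ → Fin l → ℕ) :
    fermionicTerm B d q z r (Fin.append n₁ n₂)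
      = fermionicTerm B d q (fun i => z i * q ^ Bv B (∑ j, n₂ j) i) r n₁
        * fermionicTerm B d q z (r + N₁) n₂ := by
  have hz_exp : ∀ i, ∑ j : Fin (N₁ + N₂), (r + (j.1 : ℤ)) * Fin.append n₁ n₂ j i
      = ∑ j, (r + (j.1 : ℤ)) * n₁ j i + ∑ j, (r + N₁ + (j.1 : ℤ)) * n₂ j i := fun i => by
    simp only [Fin.sum_univ_add, Fin.append_left, Fin.append_right, Fin.val_castAdd,
      Fin.val_natAdd, Nat.cast_add, add_assoc]
  have hz_shift : ∏ i, (z i * q ^ Bv B (∑ j, n₂ j) i) ^ (∑ j, (r + (j.1 : ℤ)) * n₁ j i)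
      = (∏ i, z i ^ (∑ j, (r + (j.1 : ℤ)) * n₁ j i))
        * q ^ (∑ i, Bv B (∑ j, n₂ j) i * ∑ j, (r + (j.1 : ℤ)) * n₁ j i) := by
    simp only [mul_zpow, ← zpow_mul, prod_mul_distrib, zpow_sum₀ hq]
  simp only [fermionicTerm, Eint_append B d hB hdiag, hz_exp, zpow_add₀ hq, zpow_add₀ (hz _),
    prod_mul_distrib, Fin.prod_univ_add, Fin.append_left, Fin.append_right, hz_shift, mul_inv]
  ring

lemma fermionicSum_add (hq : q ≠ 0) (hz : ∀ i, z i ≠ 0) (hB : B.IsSymm)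
    (hdiag : ∀ i, 2 ∣ B i i) (r : ℤ) (N₁ N₂ : ℕ) (m : Fin l → ℕ) :
    fermionicSum B d q z r (N₁ + N₂) m
      = ∑ b ∈ Iic m, fermionicSum B d q (fun i => z i * q ^ Bv B b i) r N₁ (m - b)
          * fermionicSum B d q z (r + N₁) N₂ b := by
  rw [fermionicSum, sum_weakCompositions_add]
  refine sum_congr rfl fun b _ => ?_
  rw [fermionicSum, fermionicSum, sum_mul_sum]
  refine sum_congr rfl fun n₁ _ => sum_congr rfl fun n₂ hn₂ => ?_
  rw [fermionicTerm_append B d hq hz hB hdiag, mem_weakCompositions.mp hn₂]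

end FermionicSum

theorem stmt_2_general (l : ℕ) (B : Matrix (Fin l) (Fin l) ℤ)
    (d : Fin l → ℕ) (hsym : B.IsSymm)
    (hdiag : ∀ i, B i i = 2 * d i)
    (r u s : ℤ) (hru : r ≤ u) (hus : u < s) (m : Fin l → ℕ) :
    Jint B d (q2 l) (z2 l) r s m
    = ∑ b ∈ Finset.Iic m,
        Jint B d (q2 l) (fun i => z2 l i * q2 l ^ (Bv B b i)) r u (m - b) *
        Jint B d (q2 l) (z2 l) (u + 1) s b := by
  have hq : q2 l ≠ 0 := IsFractionRing.to_map_eq_zero_iff.not.mpr (MvPolynomial.X_ne_zero _)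
  have hz : ∀ i, z2 l i ≠ 0 := fun _ =>
    IsFractionRing.to_map_eq_zero_iff.not.mpr (MvPolynomial.X_ne_zero _)
  have hN : (s - r).toNat + 1 = ((u - r).toNat + 1) + ((s - (u + 1)).toNat + 1) := by omega
  have hr : r + (((u - r).toNat + 1 : ℕ) : ℤ) = u + 1 := by omega
  simp only [Jint_eq_fermionicSum]
  rw [hN, fermionicSum_add B d hq hz hsym (fun i => ⟨d i, hdiag i⟩), hr]

theorem stmt_2 (l : ℕ) (hl : 1 ≤ l) (B : Matrix (Fin l) (Fin l) ℤ)
    (d : Fin l → ℕ) (hsym : B.IsSymm) (hdpos : ∀ i, 0 < d i)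
    (hdiag : ∀ i, B i i = 2 * d i) (hoff : ∀ i j, i ≠ j → B i j ≤ 0)
    (hdvd : ∀ i j, (d i : ℤ) ∣ B i j)
    (hposdef : ∀ x : Fin l → ℤ, x ≠ 0 → 0 < ∑ i, ∑ j, B i j * x i * x j)
    (r u s : ℤ) (hru : r ≤ u) (hus : u < s) (m : Fin l → ℕ) :
    Jint B d (q2 l) (z2 l) r s m
    = ∑ b ∈ Finset.Iic m,
        Jint B d (q2 l) (fun i => z2 l i * q2 l ^ (Bv B b i)) r u (m - b) *
        Jint B d (q2 l) (z2 l) (u + 1) s b :=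
  stmt_2_general l B d hsym hdiag r u s hru hus m

end
end

section
/- For every integer m ≥ 0 the closed form I_m := 1/((q)_m (z)_m) ∈ ℚ(q,z) satisfies the sl_2 fermionic recursion I_m = ∑_{a=0}^m z^a q^{a(a−1)} (q)_{m−a}^{−1} I_a; equivalently, 1/(z)_m = ∑_{a=0}^m [m,a]_q · z^a q^{a(a−1)} / (z)_a holds in the field ℚ(q,z). Consequently the sl_2 fermionic sum I_m(q,z) equals 1/((q)_m (z)_m). -/
/- STATEMENT 4: sl_2 fermionic recursion for the closed form 1/((q)_m (z)_m),
   the equivalent q-binomial identity, and the consequence that the sl_2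
   fermionic sum I_m(q,z) (the unique solution of the fermionic recursion
   with I_0 = 1) equals 1/((q)_m (z)_m).  Work in the field ℚ(q,z). -/

noncomputable section

open scoped BigOperators

/-- The field ℚ(q,z). -/
abbrev F4 : Type := FractionRing (MvPolynomial (Fin 2) ℚ)

/-- q -/
def q4 : F4 := algebraMap (MvPolynomial (Fin 2) ℚ) F4 (MvPolynomial.X 0)

/-- z -/
def z4 : F4 := algebraMap (MvPolynomial (Fin 2) ℚ) F4 (MvPolynomial.X 1)

/-- `(x)_n = ∏_{i=1}^n (1 - q^{i-1} x)` -/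
def poch4 (x : F4) (n : ℕ) : F4 := ∏ i ∈ Finset.range n, (1 - q4 ^ i * x)

/-- `(q)_n = ∏_{k=1}^n (1 - q^k)` -/
def qp4 (n : ℕ) : F4 := ∏ k ∈ Finset.range n, (1 - q4 ^ (k + 1))

/-- q-binomial coefficient `[m,a]_q = (q)_m / ((q)_a (q)_{m-a})` -/
def qbinom4 (m a : ℕ) : F4 := qp4 m / (qp4 a * qp4 (m - a))

/-!
Write `T_a(x) = x^a q^(a(a-1)) / (x)_a`. The q-Pascal rule turns `∑_a [m+1,a] T_a(x)` into
`∑_a [m,a] (q^a T_a(x) + T_(a+1)(x))`, and `q^a T_a(x) + T_(a+1)(x) = T_a(qx) / (1 - x)`.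
Since `(x)_(m+1) = (1 - x) (qx)_m`, induction on `m`, for all `x` at once, gives
`1/(x)_m = ∑_a [m,a] T_a(x)`; dividing by `(q)_m` gives the fermionic recursion for the closed
form. The recursion has a unique solution with `I_0 = 1`, because the coefficient
`z^m q^(m(m-1))` of `I_m` on its right-hand side is never `1` for `m ≥ 1`.
-/

open Finset

section QAnalogues

variable {R : Type*} [CommRing R] (q : R)

/-- `(x; q)_n`; the `(q)_n` of the statement is `qPochhammer q q n`. -/
def qPochhammer (x : R) (n : ℕ) : R := ∏ i ∈ range n, (1 - q ^ i * x)

def gaussBinom : ℕ → ℕ → R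
  | _, 0 => 1
  | 0, _ + 1 => 0
  | m + 1, a + 1 => q ^ (a + 1) * gaussBinom m (a + 1) + gaussBinom m a

@[simp]
theorem qPochhammer_zero (x : R) : qPochhammer q x 0 = 1 := prod_range_zero _

theorem qPochhammer_succ (x : R) (n : ℕ) :
    qPochhammer q x (n + 1) = qPochhammer q x n * (1 - q ^ n * x) :=
  prod_range_succ _ n

theorem qPochhammer_succ' (x : R) (n : ℕ) :
    qPochhammer q x (n + 1) = (1 - x) * qPochhammer q (q * x) n := by
  rw [qPochhammer, prod_range_succ', pow_zero, one_mul, mul_comm]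
  exact congrArg _ (prod_congr rfl fun i _ => by ring)

@[simp]
theorem gaussBinom_zero_right (m : ℕ) : gaussBinom q m 0 = 1 := by
  cases m <;> rfl

theorem gaussBinom_succ_succ (m a : ℕ) :
    gaussBinom q (m + 1) (a + 1) = q ^ (a + 1) * gaussBinom q m (a + 1) + gaussBinom q m a :=
  rfl

theorem gaussBinom_eq_zero_of_lt {m a : ℕ} (h : m < a) : gaussBinom q m a = 0 := by
  induction m generalizing a with
  | zero => obtain ⟨a, rfl⟩ := Nat.exists_eq_succ_of_ne_zero h.ne'; rfl
  | succ m ih =>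
    obtain ⟨a, rfl⟩ := Nat.exists_eq_succ_of_ne_zero (Nat.ne_zero_of_lt h)
    rw [gaussBinom_succ_succ, ih (by omega), ih (by omega), mul_zero, add_zero]

@[simp]
theorem gaussBinom_self (m : ℕ) : gaussBinom q m m = 1 := by
  induction m with
  | zero => rfl
  | succ m ih => rw [gaussBinom_succ_succ, gaussBinom_eq_zero_of_lt q m.lt_succ_self, ih]; ring

theorem gaussBinom_add_mul_qPochhammer_mul_qPochhammer (a b : ℕ) :
    gaussBinom q (a + b) a * qPochhammer q q a * qPochhammer q q b =
      qPochhammer q q (a + b) := by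
  induction a generalizing b with
  | zero => simp
  | succ a iha =>
    induction b with
    | zero => simp
    | succ b ihb =>
      have h₁ := iha (b + 1)
      rw [← add_assoc] at h₁
      rw [add_right_comm] at ihb
      rw [show a + 1 + (b + 1) = a + b + 1 + 1 by omega, gaussBinom_succ_succ,
        qPochhammer_succ q q (a + b + 1)]
      linear_combination (q ^ (a + 1) * (1 - q ^ b * q)) * ihb + (1 - q ^ a * q) * h₁ +
        (q ^ (a + 1) * gaussBinom q (a + b + 1) (a + 1) * qPochhammer q q (a + 1)) *
          qPochhammer_succ q q b +
        (gaussBinom q (a + b + 1) a * qPochhammer q q (b + 1)) * qPochhammer_succ q q a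

theorem sum_range_succ_gaussBinom_succ_mul (f : ℕ → R) (m : ℕ) :
    ∑ a ∈ range (m + 2), gaussBinom q (m + 1) a * f a =
      ∑ a ∈ range (m + 1), gaussBinom q m a * (q ^ a * f a + f (a + 1)) := by
  have hshift : ∑ a ∈ range (m + 1), q ^ a * gaussBinom q m a * f a =
      ∑ a ∈ range (m + 1), q ^ (a + 1) * gaussBinom q m (a + 1) * f (a + 1) + f 0 := by
    have h := sum_range_succ' (fun a => q ^ a * gaussBinom q m a * f a) (m + 1)
    rw [sum_range_succ, gaussBinom_eq_zero_of_lt q m.lt_succ_self] at h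
    simpa using h
  simp only [sum_range_succ' _ (m + 1), gaussBinom_succ_succ, gaussBinom_zero_right, mul_add,
    add_mul, sum_add_distrib, ← mul_assoc, mul_comm _ (q ^ _), hshift]
  ring

end QAnalogues

section Field

variable {K : Type*} [Field K] {q x : K}

theorem qPochhammer_ne_zero (hx : ∀ i, 1 - q ^ i * x ≠ 0) (n : ℕ) : qPochhammer q x n ≠ 0 :=
  prod_ne_zero_iff.mpr fun i _ => hx i

theorem gaussBinom_eq_div (hq : ∀ i, 1 - q ^ i * q ≠ 0) {m a : ℕ} (h : a ≤ m) :
    gaussBinom q m a = qPochhammer q q m / (qPochhammer q q a * qPochhammer q q (m - a)) := by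
  rw [eq_div_iff (mul_ne_zero (qPochhammer_ne_zero hq a) (qPochhammer_ne_zero hq (m - a))),
    ← mul_assoc]
  obtain ⟨b, rfl⟩ := Nat.exists_eq_add_of_le h
  rw [Nat.add_sub_cancel_left, gaussBinom_add_mul_qPochhammer_mul_qPochhammer]

theorem pow_mul_term_add_succ_term (hx : ∀ i, 1 - q ^ i * x ≠ 0) (a : ℕ) :
    q ^ a * (x ^ a * q ^ (a * (a - 1)) / qPochhammer q x a) +
        x ^ (a + 1) * q ^ ((a + 1) * (a + 1 - 1)) / qPochhammer q x (a + 1) =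
      (q * x) ^ a * q ^ (a * (a - 1)) / qPochhammer q (q * x) a / (1 - x) := by
  have hden : qPochhammer q (q * x) a * (1 - x) = qPochhammer q x a * (1 - q ^ a * x) := by
    rw [mul_comm, ← qPochhammer_succ', qPochhammer_succ]
  have hexp : (a + 1) * (a + 1 - 1) = a * (a - 1) + a + a := by
    cases a <;> simp only [Nat.succ_sub_one]; ring
  have hP := qPochhammer_ne_zero hx a
  have hxa := hx a
  rw [div_div, hden, qPochhammer_succ, hexp, pow_add, pow_add]
  field_simp
  ring

theorem one_div_qPochhammer_eq_sum (hx : ∀ i, 1 - q ^ i * x ≠ 0) (m : ℕ) :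
    1 / qPochhammer q x m =
      ∑ a ∈ range (m + 1), gaussBinom q m a * x ^ a * q ^ (a * (a - 1)) / qPochhammer q x a := by
  induction m generalizing x with
  | zero => simp
  | succ m ih =>
    have hqx : ∀ i, 1 - q ^ i * (q * x) ≠ 0 := fun i => by
      simpa only [pow_succ, mul_assoc] using hx (i + 1)
    let T a := x ^ a * q ^ (a * (a - 1)) / qPochhammer q x a
    calc 1 / qPochhammer q x (m + 1) = (1 / qPochhammer q (q * x) m) / (1 - x) := by
          rw [qPochhammer_succ', div_div, mul_comm]
      _ = ∑ a ∈ range (m + 1), gaussBinom q m a *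
            ((q * x) ^ a * q ^ (a * (a - 1)) / qPochhammer q (q * x) a / (1 - x)) := by
          simp only [ih hqx, sum_div, mul_assoc, mul_div_assoc]
      _ = ∑ a ∈ range (m + 1), gaussBinom q m a * (q ^ a * T a + T (a + 1)) := by
          simp only [T, pow_mul_term_add_succ_term hx]
      _ = ∑ a ∈ range (m + 2), gaussBinom q (m + 1) a * T a :=
          (sum_range_succ_gaussBinom_succ_mul q T m).symm
      _ = _ := by simp only [T, mul_assoc, mul_div_assoc]

theorem one_div_qPochhammer_mul_qPochhammer_eq_sum (hq : ∀ i, 1 - q ^ i * q ≠ 0)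
    (hx : ∀ i, 1 - q ^ i * x ≠ 0) (m : ℕ) :
    1 / (qPochhammer q q m * qPochhammer q x m) =
      ∑ a ∈ range (m + 1), x ^ a * q ^ (a * (a - 1)) / qPochhammer q q (m - a) *
        (1 / (qPochhammer q q a * qPochhammer q x a)) := by
  rw [← div_div, div_right_comm, one_div_qPochhammer_eq_sum hx, sum_div]
  refine sum_congr rfl fun a ha => ?_
  rw [gaussBinom_eq_div hq (mem_range_succ_iff.mp ha)]
  field_simp [qPochhammer_ne_zero hq m]

end Field

theorem eq_of_eq_sum_range_succ_mul {R : Type*} [CommRing R] [NoZeroDivisors R] {c : ℕ → ℕ → R}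
    {I J : ℕ → R} (hc : ∀ m, c (m + 1) (m + 1) ≠ 1) (h₀ : I 0 = J 0)
    (hI : ∀ m, I m = ∑ a ∈ range (m + 1), c m a * I a)
    (hJ : ∀ m, J m = ∑ a ∈ range (m + 1), c m a * J a) : I = J := by
  funext m
  induction m using Nat.strong_induction_on with
  | _ m ih =>
    cases m with
    | zero => exact h₀
    | succ m =>
      have hlower : ∑ a ∈ range (m + 1), c (m + 1) a * I a =
          ∑ a ∈ range (m + 1), c (m + 1) a * J a :=
        sum_congr rfl fun a ha => by rw [ih a (mem_range.mp ha)]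
      have hI' := hI (m + 1)
      have hJ' := hJ (m + 1)
      rw [sum_range_succ, hlower] at hI'
      rw [sum_range_succ] at hJ'
      have : (1 - c (m + 1) (m + 1)) * (I (m + 1) - J (m + 1)) = 0 := by
        linear_combination hI' - hJ'
      exact sub_eq_zero.mp ((mul_eq_zero.mp this).resolve_left (sub_ne_zero.mpr (hc m).symm))

/-- Evaluating `1 - X₀ⁱ X₁ᵏ` at the origin gives `1`. -/
theorem one_sub_q4_pow_mul_z4_pow_ne_zero {i k : ℕ} (h : i + k ≠ 0) :
    (1 : F4) - q4 ^ i * z4 ^ k ≠ 0 := by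
  have hmap : (1 : F4) - q4 ^ i * z4 ^ k = algebraMap (MvPolynomial (Fin 2) ℚ) F4
      (1 - MvPolynomial.X 0 ^ i * MvPolynomial.X 1 ^ k) := by
    simp [q4, z4]
  rw [hmap, Ne, map_eq_zero_iff _ (IsFractionRing.injective _ _)]
  intro hzero
  simpa [← pow_add, zero_pow h] using congrArg (MvPolynomial.eval 0) hzero

theorem poch4_eq_qPochhammer : poch4 = qPochhammer q4 := rfl

theorem qp4_eq_qPochhammer : qp4 = qPochhammer q4 q4 := by
  funext n
  simp only [qp4, qPochhammer, pow_succ]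

theorem stmt_4 :
    (∀ m : ℕ, 1 / (qp4 m * poch4 z4 m) =
      ∑ a ∈ Finset.range (m + 1),
        z4 ^ a * q4 ^ (a * (a - 1)) / qp4 (m - a) * (1 / (qp4 a * poch4 z4 a)))
    ∧ (∀ m : ℕ, 1 / poch4 z4 m =
      ∑ a ∈ Finset.range (m + 1),
        qbinom4 m a * z4 ^ a * q4 ^ (a * (a - 1)) / poch4 z4 a)
    ∧ (∀ I : ℕ → F4, I 0 = 1 →
        (∀ m : ℕ, I m = ∑ a ∈ Finset.range (m + 1),
          z4 ^ a * q4 ^ (a * (a - 1)) / qp4 (m - a) * I a) →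
        ∀ m : ℕ, I m = 1 / (qp4 m * poch4 z4 m)) := by
  have hq (i : ℕ) : 1 - q4 ^ i * q4 ≠ 0 := by
    simpa [← pow_succ] using one_sub_q4_pow_mul_z4_pow_ne_zero (i := i + 1) (k := 0) (by omega)
  have hz (i : ℕ) : 1 - q4 ^ i * z4 ≠ 0 := by
    simpa using one_sub_q4_pow_mul_z4_pow_ne_zero (i := i) (k := 1) (by omega)
  rw [poch4_eq_qPochhammer, qp4_eq_qPochhammer]
  have hrec := one_div_qPochhammer_mul_qPochhammer_eq_sum hq hz
  refine ⟨hrec, fun m => ?_, fun I hI₀ hI m => ?_⟩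
  · rw [one_div_qPochhammer_eq_sum hz]
    refine sum_congr rfl fun a ha => ?_
    rw [qbinom4, qp4_eq_qPochhammer, gaussBinom_eq_div hq (mem_range_succ_iff.mp ha)]
  · refine congrFun (eq_of_eq_sum_range_succ_mul (fun m => ?_) ?_ hI hrec) m
    · intro hc
      rw [Nat.sub_self, qPochhammer_zero, div_one, Nat.add_sub_cancel] at hc
      exact one_sub_q4_pow_mul_z4_pow_ne_zero (i := (m + 1) * m) (k := m + 1) (by omega)
        (by linear_combination -hc)
    · simp [hI₀]

end
end

section
/- For every integer m ≥ 0 the following identity holds in the field ℚ(q,z,w): 1/((q)_m (wz)_m) = ∑_{a=0}^m [ B_a(w) / ( (z^{−1} q^{2(1−a)})_a · (wz)_a ) ] · [ 1 / ( (q)_{m−a} · (q^{2a} z)_{m−a} ) ], where B_a(w) = ∏_{i=1}^a (1 − w q^{i−a}) / (q)_a. (With w = q^ν this is the recursion I_m(q, q^ν z) = ∑_{0≤a≤m} X^{(0,ν)}_a(q,z) I_{m−a}(q, q^{2a} z) for the sl_2 fermionic sums.) -/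
/- STATEMENT 7: identity in ℚ(q,z,w):
   1/((q)_m (wz)_m)
     = ∑_{a=0}^m [ B_a(w) / ((z⁻¹ q^{2(1−a)})_a (wz)_a) ]
                · [ 1 / ((q)_{m−a} (q^{2a} z)_{m−a}) ],
   where B_a(w) = ∏_{i=1}^a (1 − w q^{i−a}) / (q)_a. -/

noncomputable section

open scoped BigOperators

/-- The field ℚ(q,z,w). -/
abbrev F7 : Type := FractionRing (MvPolynomial (Fin 3) ℚ)

def q7 : F7 := algebraMap (MvPolynomial (Fin 3) ℚ) F7 (MvPolynomial.X 0)
def z7 : F7 := algebraMap (MvPolynomial (Fin 3) ℚ) F7 (MvPolynomial.X 1)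
def w7 : F7 := algebraMap (MvPolynomial (Fin 3) ℚ) F7 (MvPolynomial.X 2)

/-- `(x)_n = ∏_{i=1}^n (1 - q^{i-1} x)` -/
def poch7 (x : F7) (n : ℕ) : F7 := ∏ i ∈ Finset.range n, (1 - q7 ^ i * x)

/-- `(q)_n = ∏_{k=1}^n (1 - q^k)` -/
def qp7 (n : ℕ) : F7 := ∏ k ∈ Finset.range n, (1 - q7 ^ (k + 1))

/-- `B_a(w) = ∏_{i=1}^a (1 − w q^{i−a}) / (q)_a` -/
def B7 (a : ℕ) : F7 := (∏ i ∈ Finset.range a, (1 - w7 * q7 ^ ((i : ℤ) + 1 - a))) / qp7 a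

/-!
Both sides `S m` satisfy `S 0 = 1` and `S (m + 1) = c m * S m` with
`c m = 1 / ((1 - q ^ (m + 1)) * (1 - q ^ m * w z))`. For the sum `S m = ∑ a, T m a` this is a
Wilf–Zeilberger argument: for an explicit rational certificate `R m a`, the terms
`G m a = R m a * T (m + 1) a` satisfy `G m (a + 1) - G m a = T (m + 1) a - c m * T m a`, `G m 0 = 0`
and `G m (m + 1) = -T (m + 1) (m + 1)`, so the sum over `a ≤ m` telescopes. Each step is an identity
of rational functions once the ratios `T (m + 1) a / T m a` and `T (m + 1) (a + 1) / T m a` are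
known; it holds as soon as no denominator vanishes, i.e. `q` is not a root of unity, `z ∉ q ^ ℤ` and
`q ^ n * w z ≠ 1` for `n ≥ 0`.
-/

open Finset

section QPochhammer

variable {R : Type*} [CommRing R]

def qPoch (q x : R) (n : ℕ) : R := ∏ i ∈ range n, (1 - q ^ i * x)

theorem qPoch_zero (q x : R) : qPoch q x 0 = 1 := prod_range_zero _

theorem qPoch_succ (q x : R) (n : ℕ) : qPoch q x (n + 1) = qPoch q x n * (1 - q ^ n * x) :=
  prod_range_succ _ _

theorem qPoch_succ' (q x : R) (n : ℕ) : qPoch q x (n + 1) = (1 - x) * qPoch q (q * x) n := by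
  rw [qPoch, prod_range_succ', mul_comm]
  simp only [qPoch, pow_succ, pow_zero, one_mul, mul_assoc]

theorem qPoch_add_two (q x : R) (n : ℕ) :
    qPoch q x (n + 2) = (1 - x) * (1 - q * x) * qPoch q (q ^ 2 * x) n := by
  rw [qPoch_succ', qPoch_succ', mul_assoc, ← mul_assoc q, ← sq]

end QPochhammer

section QPochhammerField

variable {K : Type*} [Field K] {q : K}

theorem qPoch_sq_mul {x : K} (hx : 1 - x ≠ 0) (hqx : 1 - q * x ≠ 0) (n : ℕ) :
    qPoch q (q ^ 2 * x) n =
      (1 - q ^ n * x) * (1 - q ^ (n + 1) * x) / ((1 - x) * (1 - q * x)) * qPoch q x n := by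
  have key := qPoch_add_two q x n
  rw [qPoch_succ, qPoch_succ] at key
  rw [div_mul_eq_mul_div, eq_div_iff (mul_ne_zero hx hqx)]
  linear_combination -key

theorem qPoch_mul_zpow_one_sub_succ (hq : q ≠ 0) (x : K) (a : ℕ) :
    qPoch q (x * q ^ (1 - ((a + 1 : ℕ) : ℤ))) (a + 1) =
      (q ^ a - x) / q ^ a * qPoch q (x * q ^ (1 - (a : ℤ))) a := by
  have hfirst : x * q ^ (1 - ((a + 1 : ℕ) : ℤ)) = x / q ^ a := by
    rw [show 1 - ((a + 1 : ℕ) : ℤ) = -(a : ℤ) by push_cast; ring, zpow_neg, zpow_natCast,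
      div_eq_mul_inv]
  have hshift : q * (x / q ^ a) = x * q ^ (1 - (a : ℤ)) := by
    rw [zpow_sub₀ hq, zpow_one, zpow_natCast]
    ring
  rw [qPoch_succ', hfirst, hshift, one_sub_div (pow_ne_zero a hq)]

theorem qPoch_inv_mul_zpow_two_mul_succ (hq : q ≠ 0) {z : K} (hz : z ≠ 0) {a : ℕ}
    (h : (q ^ a) ^ 2 * z - q * q ^ a ≠ 0) :
    qPoch q (z⁻¹ * q ^ (2 * (1 - ((a + 1 : ℕ) : ℤ)))) (a + 1) =
      ((q ^ a) ^ 2 * z - 1) * ((q ^ a) ^ 2 * z - q) /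
          (((q ^ a) ^ 2 * z - q * q ^ a) * ((q ^ a) ^ 2 * z)) *
        qPoch q (z⁻¹ * q ^ (2 * (1 - (a : ℤ)))) a := by
  have hsq : q ^ (2 * a) = (q ^ a) ^ 2 := by rw [← pow_mul, mul_comm]
  have hy : z⁻¹ * q ^ (2 * (1 - ((a + 1 : ℕ) : ℤ))) = ((q ^ a) ^ 2 * z)⁻¹ := by
    rw [show 2 * (1 - ((a + 1 : ℕ) : ℤ)) = -((2 * a : ℕ) : ℤ) by push_cast; ring, zpow_neg,
      zpow_natCast, hsq, mul_inv, mul_comm]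
  have hshift : q ^ 2 * ((q ^ a) ^ 2 * z)⁻¹ = z⁻¹ * q ^ (2 * (1 - (a : ℤ))) := by
    rw [show 2 * (1 - (a : ℤ)) = (2 : ℕ) + -((2 * a : ℕ) : ℤ) by push_cast; ring,
      zpow_add₀ hq, zpow_neg, zpow_natCast, zpow_natCast, hsq, mul_inv]
    ring
  have key := (qPoch_succ q ((q ^ a) ^ 2 * z)⁻¹ (a + 1)).symm.trans (qPoch_add_two q _ a)
  rw [hshift] at key
  rw [hy, div_mul_eq_mul_div,
    eq_div_iff (mul_ne_zero h (mul_ne_zero (pow_ne_zero 2 (pow_ne_zero a hq)) hz))]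
  -- opaque atoms, so that `field_simp` does not rewrite inside the `qPoch` arguments
  generalize qPoch q ((q ^ a) ^ 2 * z)⁻¹ (a + 1) = P₁ at key ⊢
  generalize qPoch q (z⁻¹ * q ^ (2 * (1 - (a : ℤ)))) a = P₀ at key ⊢
  field_simp at key
  linear_combination key

end QPochhammerField

namespace FermionicRecursion

variable {K : Type*} [Field K] {q z w : K}

structure IsGeneric (q z w : K) : Prop where
  q_ne_zero : q ≠ 0
  z_ne_zero : z ≠ 0
  pow_succ_ne_one : ∀ n : ℕ, q ^ (n + 1) ≠ 1
  z_ne_zpow : ∀ e : ℤ, z ≠ q ^ e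
  pow_mul_wz_ne_one : ∀ n : ℕ, q ^ n * (w * z) ≠ 1

namespace IsGeneric

theorem pow_mul_z_ne_pow (hg : IsGeneric q z w) (i j : ℕ) : q ^ i * z ≠ q ^ j := by
  intro h
  apply hg.z_ne_zpow ((j : ℤ) - i)
  rw [zpow_sub₀ hg.q_ne_zero, zpow_natCast, zpow_natCast, ← h]
  field_simp [pow_ne_zero i hg.q_ne_zero]

theorem one_sub_pow_ne_zero (hg : IsGeneric q z w) (n : ℕ) : 1 - q ^ (n + 1) ≠ 0 :=
  sub_ne_zero.mpr (hg.pow_succ_ne_one n).symm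

theorem one_sub_pow_mul_z_ne_zero (hg : IsGeneric q z w) (n : ℕ) : 1 - q ^ n * z ≠ 0 :=
  sub_ne_zero.mpr (by simpa using (hg.pow_mul_z_ne_pow n 0).symm)

theorem one_sub_pow_mul_wz_ne_zero (hg : IsGeneric q z w) (n : ℕ) : 1 - q ^ n * (w * z) ≠ 0 :=
  sub_ne_zero.mpr (hg.pow_mul_wz_ne_one n).symm

theorem pow_mul_z_sub_pow_ne_zero (hg : IsGeneric q z w) (i j : ℕ) : q ^ i * z - q ^ j ≠ 0 :=
  sub_ne_zero.mpr (hg.pow_mul_z_ne_pow i j)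

end IsGeneric

variable (q z w) in
def summand (m a : ℕ) : K :=
  qPoch q (w * q ^ (1 - (a : ℤ))) a / qPoch q q a /
      (qPoch q (z⁻¹ * q ^ (2 * (1 - (a : ℤ)))) a * qPoch q (w * z) a) *
    (1 / (qPoch q q (m - a) * qPoch q (q ^ (2 * a) * z) (m - a)))

theorem summand_succ_left (a n : ℕ) :
    summand q z w (a + n + 1) a =
      summand q z w (a + n) a / ((1 - q ^ (n + 1)) * (1 - q ^ n * ((q ^ a) ^ 2 * z))) := by
  rw [summand, summand, show a + n + 1 - a = n + 1 by omega, Nat.add_sub_cancel_left,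
    qPoch_succ, qPoch_succ, pow_succ, ← pow_mul, mul_comm a 2]
  simp only [div_eq_mul_inv, mul_inv, one_mul]
  ring

theorem summand_succ_succ (hg : IsGeneric q z w) (a n : ℕ) :
    summand q z w (a + n + 1) (a + 1) =
      -((q ^ a - w) * (q ^ a * z - q) * ((q ^ a) ^ 2 * z) * (1 - q * ((q ^ a) ^ 2 * z))) /
        (((q ^ a) ^ 2 * z - q) * (1 - q * q ^ a) * (1 - q ^ a * (w * z)) *
          (1 - q ^ n * ((q ^ a) ^ 2 * z)) * (1 - q * q ^ n * ((q ^ a) ^ 2 * z))) *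
        summand q z w (a + n) a := by
  have hq := hg.q_ne_zero
  have hz := hg.z_ne_zero
  have hsq : q ^ (2 * a) = (q ^ a) ^ 2 := by rw [← pow_mul, mul_comm]
  have hX1 : 1 - (q ^ a) ^ 2 * z ≠ 0 := by
    simpa [hsq] using hg.one_sub_pow_mul_z_ne_zero (2 * a)
  have hqX : 1 - q * ((q ^ a) ^ 2 * z) ≠ 0 := by
    convert hg.one_sub_pow_mul_z_ne_zero (2 * a + 1) using 2; ring
  have hXqA : (q ^ a) ^ 2 * z - q * q ^ a ≠ 0 := by
    convert hg.pow_mul_z_sub_pow_ne_zero (2 * a) (a + 1) using 2 <;> ring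
  have hD : qPoch q (q ^ (2 * (a + 1)) * z) n =
      (1 - q ^ n * ((q ^ a) ^ 2 * z)) * (1 - q * q ^ n * ((q ^ a) ^ 2 * z)) /
          ((1 - (q ^ a) ^ 2 * z) * (1 - q * ((q ^ a) ^ 2 * z))) *
        qPoch q (q ^ (2 * a) * z) n := by
    rw [show q ^ (2 * (a + 1)) * z = q ^ 2 * ((q ^ a) ^ 2 * z) by ring, qPoch_sq_mul hX1 hqX, hsq,
      pow_succ' q n]
  have hρ : (q ^ a - w) / q ^ a /
        ((1 - q * q ^ a) * (((q ^ a) ^ 2 * z - 1) * ((q ^ a) ^ 2 * z - q) /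
          (((q ^ a) ^ 2 * z - q * q ^ a) * ((q ^ a) ^ 2 * z))) * (1 - q ^ a * (w * z)) *
        ((1 - q ^ n * ((q ^ a) ^ 2 * z)) * (1 - q * q ^ n * ((q ^ a) ^ 2 * z)) /
          ((1 - (q ^ a) ^ 2 * z) * (1 - q * ((q ^ a) ^ 2 * z))))) =
      -((q ^ a - w) * (q ^ a * z - q) * ((q ^ a) ^ 2 * z) * (1 - q * ((q ^ a) ^ 2 * z))) /
        (((q ^ a) ^ 2 * z - q) * (1 - q * q ^ a) * (1 - q ^ a * (w * z)) *
          (1 - q ^ n * ((q ^ a) ^ 2 * z)) * (1 - q * q ^ n * ((q ^ a) ^ 2 * z))) := by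
    have hX1' : (q ^ a) ^ 2 * z - 1 ≠ 0 := fun h ↦ hX1 (by linear_combination -h)
    generalize q ^ a = A at *
    generalize q ^ n = N at *
    field_simp
    ring
  rw [summand, summand, show a + n + 1 - (a + 1) = n by omega, Nat.add_sub_cancel_left,
    qPoch_mul_zpow_one_sub_succ hq, qPoch_inv_mul_zpow_two_mul_succ hq hz hXqA, hD,
    qPoch_succ q q a, qPoch_succ q (w * z) a, ← hρ, hsq]
  simp only [div_eq_mul_inv, mul_inv, one_mul]
  ring

variable (q z w) in
/-- The Wilf–Zeilberger certificate `R m a`, written in `M = q ^ m` and `X = q ^ a`. -/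
def wzCert (M X : K) : K :=
  q * M * (1 - M * X * z) * (q - w * z * X) * (1 - X) /
    (X * (X ^ 2 * z - q) * (1 - q * M) * (1 - M * (w * z)))

theorem wzCert_one (M : K) : wzCert q z w M 1 = 0 := by
  simp [wzCert]

theorem wzCert_q_mul_eq_neg_one (hq : q ≠ 0) {M : K} (hM : M ≠ 0) (hqM : 1 - q * M ≠ 0)
    (hMwz : 1 - M * (w * z) ≠ 0) (hqMz : 1 - q * M ^ 2 * z ≠ 0) :
    wzCert q z w M (q * M) = -1 := by
  rw [wzCert, div_eq_iff (by
    refine mul_ne_zero (mul_ne_zero (mul_ne_zero (mul_ne_zero hq hM) ?_) hqM) hMwz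
    rw [show (q * M) ^ 2 * z - q = -q * (1 - q * M ^ 2 * z) by ring]
    exact mul_ne_zero (neg_ne_zero.mpr hq) hqMz)]
  ring

theorem wzCert_identity {A N : K} (hq : q ≠ 0) (hA : A ≠ 0) (hXq : A ^ 2 * z - q ≠ 0)
    (hqA : 1 - q * A ≠ 0) (hAwz : 1 - A * (w * z) ≠ 0) (hNX : 1 - N * (A ^ 2 * z) ≠ 0)
    (hqNX : 1 - q * N * (A ^ 2 * z) ≠ 0) (hqX : 1 - q * (A ^ 2 * z) ≠ 0)
    (hqM : 1 - q * (A * N) ≠ 0) (hMwz : 1 - A * N * (w * z) ≠ 0) (hqN : 1 - q * N ≠ 0) :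
    wzCert q z w (A * N) (q * A) *
        (-((A - w) * (A * z - q) * (A ^ 2 * z) * (1 - q * (A ^ 2 * z))) /
          ((A ^ 2 * z - q) * (1 - q * A) * (1 - A * (w * z)) *
            (1 - N * (A ^ 2 * z)) * (1 - q * N * (A ^ 2 * z)))) -
      wzCert q z w (A * N) A * (1 / ((1 - q * N) * (1 - N * (A ^ 2 * z)))) =
    1 / ((1 - q * N) * (1 - N * (A ^ 2 * z))) - 1 / ((1 - q * (A * N)) * (1 - A * N * (w * z))) := by
  have hqAz : (q * A) ^ 2 * z - q ≠ 0 := by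
    rw [show (q * A) ^ 2 * z - q = -q * (1 - q * (A ^ 2 * z)) by ring]
    exact mul_ne_zero (neg_ne_zero.mpr hq) hqX
  -- cancelling the common factors first keeps the final cross-multiplication small
  have h₁ : wzCert q z w (A * N) (q * A) *
        (-((A - w) * (A * z - q) * (A ^ 2 * z) * (1 - q * (A ^ 2 * z))) /
          ((A ^ 2 * z - q) * (1 - q * A) * (1 - A * (w * z)) *
            (1 - N * (A ^ 2 * z)) * (1 - q * N * (A ^ 2 * z)))) =
      N * (A - w) * (A * z - q) * (A ^ 2 * z) /
        ((A ^ 2 * z - q) * (1 - N * (A ^ 2 * z)) * (1 - q * (A * N)) * (1 - A * N * (w * z))) := by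
    rw [wzCert, div_mul_div_comm, div_eq_div_iff (by simp [*]) (by simp [*])]
    ring
  have h₀ : wzCert q z w (A * N) A * (1 / ((1 - q * N) * (1 - N * (A ^ 2 * z)))) =
      q * N * (q - A * (w * z)) * (1 - A) /
        ((A ^ 2 * z - q) * (1 - q * (A * N)) * (1 - A * N * (w * z)) * (1 - q * N)) := by
    rw [wzCert, div_mul_div_comm, div_eq_div_iff (by simp [*]) (by simp [*])]
    ring
  rw [h₁, h₀, div_sub_div _ _ (by simp [*]) (by simp [*]),
    div_sub_div _ _ (by simp [*]) (by simp [*]), div_eq_div_iff (by simp [*]) (by simp [*])]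
  ring

theorem wzCert_step (hg : IsGeneric q z w) (a n : ℕ) :
    wzCert q z w (q ^ (a + n)) (q ^ (a + 1)) * summand q z w (a + n + 1) (a + 1) -
        wzCert q z w (q ^ (a + n)) (q ^ a) * summand q z w (a + n + 1) a =
      summand q z w (a + n + 1) a -
        summand q z w (a + n) a / ((1 - q ^ (a + n + 1)) * (1 - q ^ (a + n) * (w * z))) := by
  have key := wzCert_identity (z := z) (w := w) (A := q ^ a) (N := q ^ n) hg.q_ne_zero
    (pow_ne_zero a hg.q_ne_zero)
    (by convert hg.pow_mul_z_sub_pow_ne_zero (2 * a) 1 using 2 <;> ring)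
    (by convert hg.one_sub_pow_ne_zero a using 2; ring)
    (hg.one_sub_pow_mul_wz_ne_zero a)
    (by convert hg.one_sub_pow_mul_z_ne_zero (n + 2 * a) using 2; ring)
    (by convert hg.one_sub_pow_mul_z_ne_zero (n + 1 + 2 * a) using 2; ring)
    (by convert hg.one_sub_pow_mul_z_ne_zero (2 * a + 1) using 2; ring)
    (by convert hg.one_sub_pow_ne_zero (a + n) using 2; ring)
    (by convert hg.one_sub_pow_mul_wz_ne_zero (a + n) using 2; ring)
    (by convert hg.one_sub_pow_ne_zero n using 2; ring)
  rw [summand_succ_succ hg, summand_succ_left, pow_add q a n, pow_succ' q a]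
  linear_combination summand q z w (a + n) a * key

theorem sum_summand_succ (hg : IsGeneric q z w) (m : ℕ) :
    ∑ a ∈ range (m + 2), summand q z w (m + 1) a =
      (∑ a ∈ range (m + 1), summand q z w m a) / ((1 - q ^ (m + 1)) * (1 - q ^ m * (w * z))) := by
  have hq := hg.q_ne_zero
  set G : ℕ → K := fun a ↦ wzCert q z w (q ^ m) (q ^ a) * summand q z w (m + 1) a
  have hstep : ∀ a ∈ range (m + 1), G (a + 1) - G a = summand q z w (m + 1) a -
      summand q z w m a / ((1 - q ^ (m + 1)) * (1 - q ^ m * (w * z))) := by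
    intro a ha
    obtain ⟨n, rfl⟩ := Nat.exists_eq_add_of_le (mem_range_succ_iff.mp ha)
    exact wzCert_step hg a n
  have hG₀ : G 0 = 0 := by simp only [G, pow_zero, wzCert_one, zero_mul]
  have hG : G (m + 1) = -summand q z w (m + 1) (m + 1) := by
    simp only [G]
    rw [pow_succ', wzCert_q_mul_eq_neg_one hq (pow_ne_zero m hq) ?_ (hg.one_sub_pow_mul_wz_ne_zero m) ?_]
    · ring
    · convert hg.one_sub_pow_ne_zero m using 2; ring
    · convert hg.one_sub_pow_mul_z_ne_zero (2 * m + 1) using 2; ring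
  have htel := sum_range_sub G (m + 1)
  rw [sum_congr rfl hstep, sum_sub_distrib, ← sum_div, hG₀, hG] at htel
  rw [sum_range_succ]
  linear_combination htel

theorem sum_summand (hg : IsGeneric q z w) (m : ℕ) :
    ∑ a ∈ range (m + 1), summand q z w m a = 1 / (qPoch q q m * qPoch q (w * z) m) := by
  induction m with
  | zero => simp [summand, qPoch_zero]
  | succ m ih =>
    rw [sum_summand_succ hg, ih, qPoch_succ, qPoch_succ, ← pow_succ]
    simp only [div_eq_mul_inv, mul_inv, one_mul]
    ring

end FermionicRecursion

open FermionicRecursion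

theorem eval_eq_of_algebraMap_eq {p r : MvPolynomial (Fin 3) ℚ}
    (h : algebraMap (MvPolynomial (Fin 3) ℚ) F7 p = algebraMap (MvPolynomial (Fin 3) ℚ) F7 r)
    (c : Fin 3 → ℚ) : MvPolynomial.eval c p = MvPolynomial.eval c r :=
  congrArg _ (IsFractionRing.injective _ F7 h)

theorem isGeneric_q7_z7_w7 : IsGeneric q7 z7 w7 where
  q_ne_zero := by simp [q7]
  z_ne_zero := by simp [z7]
  pow_succ_ne_one n h := by
    have := eval_eq_of_algebraMap_eq (p := MvPolynomial.X 0 ^ (n + 1)) (r := 1)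
      (by simpa [q7] using h) ![0, 1, 1]
    simp at this
  z_ne_zpow e h := by
    obtain ⟨k, rfl | rfl⟩ := e.eq_nat_or_neg
    · have := eval_eq_of_algebraMap_eq (p := MvPolynomial.X 1) (r := MvPolynomial.X 0 ^ k)
        (by simpa [q7, z7] using h) ![1, 0, 1]
      simp at this
    · rw [zpow_neg, zpow_natCast, ← mul_eq_one_iff_eq_inv₀ (pow_ne_zero k (by simp [q7]))] at h
      have := eval_eq_of_algebraMap_eq (p := MvPolynomial.X 1 * MvPolynomial.X 0 ^ k) (r := 1)
        (by simpa [q7, z7] using h) ![1, 0, 1]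
      simp at this
  pow_mul_wz_ne_one n h := by
    have := eval_eq_of_algebraMap_eq
      (p := MvPolynomial.X 0 ^ n * (MvPolynomial.X 2 * MvPolynomial.X 1)) (r := 1)
      (by simpa [q7, z7, w7] using h) ![1, 0, 1]
    simp at this

theorem qp7_eq_qPoch (n : ℕ) : qp7 n = qPoch q7 q7 n :=
  prod_congr rfl fun k _ ↦ by rw [pow_succ]

theorem B7_eq (a : ℕ) : B7 a = qPoch q7 (w7 * q7 ^ (1 - (a : ℤ))) a / qp7 a := by
  refine congrArg (· / qp7 a) (prod_congr rfl fun i _ ↦ ?_)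
  rw [add_sub_assoc, zpow_add₀ isGeneric_q7_z7_w7.q_ne_zero, zpow_natCast]
  ring

theorem stmt_7 (m : ℕ) :
    1 / (qp7 m * poch7 (w7 * z7) m)
    = ∑ a ∈ Finset.range (m + 1),
        (B7 a / (poch7 (z7⁻¹ * q7 ^ (2 * (1 - (a : ℤ)))) a * poch7 (w7 * z7) a)) *
          (1 / (qp7 (m - a) * poch7 (q7 ^ (2 * a) * z7) (m - a))) := by
  simp only [B7_eq, qp7_eq_qPoch]
  exact (sum_summand isGeneric_q7_z7_w7 m).symm

end
end

section
/- For every m ∈ ℕ^l the function X_m is symmetric in its two groups of variables: ∑_{0 ≤ a ≤ m} J_{m−a}(z) J_a(w) q^{W(a)} w^a = ∑_{0 ≤ a ≤ m} J_{m−a}(w) J_a(z) q^{W(a)} z^a, i.e. X_m(z,w) = X_m(w,z) in ℚ(q, z_1,…,z_l, w_1,…,w_l). -/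
/-!
Expanding `J_{m-a}(z)` by its recursion writes `X_m(z,w)` as the double sum over `a + b ≤ m` of
`z^b q^{W(b)} J_b(z) · w^a q^{W(a)} J_a(w) / ∏ (q)_{m-a-b}`, which is visibly invariant under
exchanging `(z, b)` with `(w, a)`.
-/

noncomputable section

open scoped BigOperators

/-- The field ℚ(q, z_1, …, z_l, w_1, …, w_l). -/
abbrev F11 (l : ℕ) : Type :=
  FractionRing (MvPolynomial (Option (Fin l ⊕ Fin l)) ℚ)

/-- the variable q -/
def q11 (l : ℕ) : F11 l :=
  algebraMap (MvPolynomial (Option (Fin l ⊕ Fin l)) ℚ) (F11 l) (MvPolynomial.X none)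

/-- the variables z_i -/
def z11 (l : ℕ) (i : Fin l) : F11 l :=
  algebraMap (MvPolynomial (Option (Fin l ⊕ Fin l)) ℚ) (F11 l)
    (MvPolynomial.X (some (Sum.inl i)))

/-- the variables w_i -/
def w11 (l : ℕ) (i : Fin l) : F11 l :=
  algebraMap (MvPolynomial (Option (Fin l ⊕ Fin l)) ℚ) (F11 l)
    (MvPolynomial.X (some (Sum.inr i)))

/-- `W(a) = (1/2)∑ C_{ij} a_i a_j − ∑ a_i`  (the double sum is even, so integer
division by 2 gives the exact value). -/
def W11 {l : ℕ} (C : Matrix (Fin l) (Fin l) ℤ) (a : Fin l → ℕ) : ℤ :=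
  (∑ i, ∑ j, C i j * a i * a j) / 2 - ∑ i, (a i : ℤ)

/-- `(q)_n = ∏_{k=1}^n (1 − q^k)` -/
def qP {F : Type} [Field F] (q : F) (n : ℕ) : F :=
  ∏ k ∈ Finset.range n, (1 - q ^ (k + 1))

/-- `J` is the family satisfying `J 0 = 1` and the fermionic recursion with
variables `q`, `z` (simply-laced case). -/
def IsFermC {l : ℕ} (C : Matrix (Fin l) (Fin l) ℤ)
    {F : Type} [Field F] (q : F) (z : Fin l → F) (J : (Fin l → ℕ) → F) : Prop :=
  J 0 = 1 ∧ ∀ m : Fin l → ℕ, J m = ∑ a ∈ Finset.Iic m,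
    (∏ i, z i ^ a i) * q ^ (W11 C a) *
      (∏ i, qP q (m i - a i))⁻¹ * J a

open Finset

section IicConvolution

variable {α : Type*} [AddCommMonoid α] [PartialOrder α] [CanonicallyOrderedAdd α] [Sub α]
  [OrderedSub α] [AddLeftReflectLE α] [LocallyFiniteOrderBot α]

theorem mem_Iic_and_mem_Iic_tsub_comm {m a b : α} :
    a ∈ Iic m ∧ b ∈ Iic (m - a) ↔ a ∈ Iic (m - b) ∧ b ∈ Iic m := by
  simp only [mem_Iic, and_comm (a := a ≤ m - b)]
  constructor
  · rintro ⟨ha, hb⟩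
    have hab : a + b ≤ m := (le_tsub_iff_left ha).1 hb
    exact ⟨le_of_add_le_right hab, (le_tsub_iff_right (le_of_add_le_right hab)).2 hab⟩
  · rintro ⟨hb, ha⟩
    have hab : a + b ≤ m := (le_tsub_iff_right hb).1 ha
    exact ⟨le_of_add_le_left hab, (le_tsub_iff_left (le_of_add_le_left hab)).2 hab⟩

theorem sum_Iic_sum_Iic_tsub_comm {M : Type*} [AddCommMonoid M] (m : α) (f : α → α → M) :
    ∑ a ∈ Iic m, ∑ b ∈ Iic (m - a), f a b = ∑ b ∈ Iic m, ∑ a ∈ Iic (m - b), f a b :=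
  sum_comm' fun _ _ => mem_Iic_and_mem_Iic_tsub_comm

theorem sum_Iic_tsub_mul_comm_of_recursion {R : Type*} [CommSemiring R] {K u v Ju Jv : α → R}
    (hu : ∀ m, Ju m = ∑ a ∈ Iic m, u a * K (m - a) * Ju a)
    (hv : ∀ m, Jv m = ∑ a ∈ Iic m, v a * K (m - a) * Jv a) (m : α) :
    ∑ a ∈ Iic m, Ju (m - a) * Jv a * v a = ∑ a ∈ Iic m, Jv (m - a) * Ju a * u a :=
  calc ∑ a ∈ Iic m, Ju (m - a) * Jv a * v a
      = ∑ a ∈ Iic m, ∑ b ∈ Iic (m - a), u b * Ju b * K (m - a - b) * (v a * Jv a) := by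
        refine sum_congr rfl fun a _ => ?_
        rw [hu, sum_mul, sum_mul]
        exact sum_congr rfl fun b _ => by ring
    _ = ∑ b ∈ Iic m, ∑ a ∈ Iic (m - b), u b * Ju b * K (m - a - b) * (v a * Jv a) :=
        sum_Iic_sum_Iic_tsub_comm m _
    _ = ∑ b ∈ Iic m, Jv (m - b) * Ju b * u b := by
        refine sum_congr rfl fun b _ => ?_
        rw [hv, sum_mul, sum_mul]
        exact sum_congr rfl fun a _ => by rw [tsub_right_comm]; ring

end IicConvolution

theorem IsFermC.recursion {l : ℕ} {C : Matrix (Fin l) (Fin l) ℤ} {F : Type} [Field F] {q : F}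
    {z : Fin l → F} {J : (Fin l → ℕ) → F} (hJ : IsFermC C q z J) (m : Fin l → ℕ) :
    J m = ∑ a ∈ Iic m, (q ^ W11 C a * ∏ i, z i ^ a i) * (∏ i, qP q ((m - a) i))⁻¹ * J a := by
  rw [hJ.2 m]
  exact sum_congr rfl fun a _ => by simp only [Pi.sub_apply]; ring

theorem stmt_11_general (l : ℕ) (C : Matrix (Fin l) (Fin l) ℤ)
    (Jz Jw : (Fin l → ℕ) → F11 l)
    (hJz : IsFermC C (q11 l) (z11 l) Jz)
    (hJw : IsFermC C (q11 l) (w11 l) Jw) :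
    ∀ m : Fin l → ℕ,
      ∑ a ∈ Finset.Iic m,
        Jz (m - a) * Jw a * q11 l ^ (W11 C a) * ∏ i, w11 l i ^ a i
      = ∑ a ∈ Finset.Iic m,
        Jw (m - a) * Jz a * q11 l ^ (W11 C a) * ∏ i, z11 l i ^ a i := by
  intro m
  have h := sum_Iic_tsub_mul_comm_of_recursion (K := fun c => (∏ i, qP (q11 l) (c i))⁻¹)
    (u := fun a => q11 l ^ W11 C a * ∏ i, z11 l i ^ a i)
    (v := fun a => q11 l ^ W11 C a * ∏ i, w11 l i ^ a i) hJz.recursion hJw.recursion m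
  simp only [mul_assoc] at h ⊢
  exact h

theorem stmt_11 (l : ℕ) (hl : 1 ≤ l) (C : Matrix (Fin l) (Fin l) ℤ)
    (hsym : C.IsSymm) (hdiag : ∀ i, C i i = 2)
    (hoff : ∀ i j, i ≠ j → C i j = 0 ∨ C i j = -1)
    (hposdef : ∀ x : Fin l → ℤ, x ≠ 0 → 0 < ∑ i, ∑ j, C i j * x i * x j)
    (Jz Jw : (Fin l → ℕ) → F11 l)
    (hJz : IsFermC C (q11 l) (z11 l) Jz)
    (hJw : IsFermC C (q11 l) (w11 l) Jw) :
    ∀ m : Fin l → ℕ,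
      ∑ a ∈ Finset.Iic m,
        Jz (m - a) * Jw a * q11 l ^ (W11 C a) * ∏ i, w11 l i ^ a i
      = ∑ a ∈ Finset.Iic m,
        Jw (m - a) * Jz a * q11 l ^ (W11 C a) * ∏ i, z11 l i ^ a i :=
  stmt_11_general l C Jz Jw hJz hJw

end
end
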